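/- arXiv:2101.06873 — 9 statements merged into one kernel-verified Lean document; each statement's English description precedes it below -/
import Mathlib

section
/- Let n ≥ 5. For every j ≥ 1, the number of j-element cliques of the complement graph G_n of the cycle graph C_n equals the number of j-element cliques of G_{n-1} plus the number of (j-1)-element cliques of G_{n-2}, where by convention the number of 0-element cliques is 1 (the empty clique). Equivalently, the components of the f-vector satisfy the hyper-Pascal relation f_k(G_n) = f_k(G_{n-1}) + f_{k-1}(G_{n-2}). -/
/-- The cycle graph `C_n` on `Fin n`: `i ~ j` iff `i - j ≡ ±1 (mod n)`. -/
def cycleGraph (n : ℕ) : SimpleGraph (Fin n) where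
  Adj i j := i ≠ j ∧ ((i - j : Fin n).val = 1 ∨ (j - i : Fin n).val = 1)
  symm := by
    constructor
    intro i j h
    exact ⟨h.1.symm, h.2.symm⟩
  loopless := by
    constructor
    intro i h
    exact h.1 rfl

instance (n : ℕ) : DecidableRel (cycleGraph n).Adj :=
  fun a b => inferInstanceAs (Decidable (a ≠ b ∧ ((a - b : Fin n).val = 1 ∨ (b - a : Fin n).val = 1)))

/-- The path graph `P_n` on `Fin n`: `i ~ j` iff `|i - j| = 1`. -/
def pathGraph' (n : ℕ) : SimpleGraph (Fin n) where
  Adj i j := (i : ℕ) + 1 = (j : ℕ) ∨ (j : ℕ) + 1 = (i : ℕ)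
  symm := by
    constructor
    intro i j h
    exact h.symm
  loopless := by
    constructor
    intro i h
    rcases h with h | h <;> omega

instance (n : ℕ) : DecidableRel (pathGraph' n).Adj :=
  fun a b => inferInstanceAs (Decidable ((a : ℕ) + 1 = (b : ℕ) ∨ (b : ℕ) + 1 = (a : ℕ)))

/-- The finset of all nonempty cliques of a finite simple graph. -/
noncomputable def cliquesOf {V : Type*} [Finite V] (G : SimpleGraph V) : Finset (Finset V) := by
  classical
  letI : Fintype V := Fintype.ofFinite V
  exact Finset.univ.filter (fun s : Finset V => s.Nonempty ∧ G.IsClique (s : Set V))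

/-- The number of cliques with exactly `j` elements (the empty clique counting for `j = 0`). -/
noncomputable def cliqueCount {V : Type*} [Finite V] (G : SimpleGraph V) (j : ℕ) : ℕ := by
  classical
  letI : Fintype V := Fintype.ofFinite V
  exact (Finset.univ.filter (fun s : Finset V => G.IsClique (s : Set V) ∧ s.card = j)).card

/-- The Euler characteristic of the clique (Whitney) complex of `G`. -/
noncomputable def eulerChar {V : Type*} [Finite V] (G : SimpleGraph V) : ℤ :=
  ∑ c ∈ cliquesOf G, (-1 : ℤ) ^ (c.card + 1)

/-- The simplex generating function `f_G(t) = 1 + ∑_c t^{|c|}`. -/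
noncomputable def fgen {V : Type*} [Finite V] (G : SimpleGraph V) (t : ℝ) : ℝ :=
  1 + ∑ c ∈ cliquesOf G, t ^ c.card

open Finset

/-- Canonical clique count over a `Fintype`. -/
noncomputable def cnt {V : Type*} [Fintype V] (G : SimpleGraph V) (j : ℕ) : ℕ := by
  classical exact (univ.filter (fun s : Finset V => G.IsClique ↑s ∧ s.card = j)).card

lemma cnt_eq {V : Type*} [Fintype V] (G : SimpleGraph V) (j : ℕ)
    [DecidablePred (fun s : Finset V => G.IsClique ↑s ∧ s.card = j)] :
    cnt G j = (univ.filter (fun s : Finset V => G.IsClique ↑s ∧ s.card = j)).card := by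
  unfold cnt; congr!

lemma cliqueCount_eq_cnt {V : Type*} [Fintype V] (G : SimpleGraph V) (j : ℕ) :
    cliqueCount G j = cnt G j := by
  classical
  unfold cliqueCount cnt
  rw [Subsingleton.elim (Fintype.ofFinite V) ‹Fintype V›]

lemma cnt_zero {V : Type*} [Fintype V] (G : SimpleGraph V) : cnt G 0 = 1 := by
  classical
  rw [cnt_eq]
  rw [show (univ.filter (fun s : Finset V => G.IsClique ↑s ∧ s.card = 0)) = {∅} from ?_]
  · simp
  · ext s
    simp only [mem_filter, mem_univ, true_and, mem_singleton, Finset.card_eq_zero]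
    constructor
    · rintro ⟨-, h⟩; exact h
    · rintro rfl; exact ⟨by simp, rfl⟩

lemma cnt_split {β : Type*} [Fintype β] [DecidableEq β] (H : SimpleGraph β) (v : β) (j : ℕ)
    [DecidablePred (fun s : Finset β => H.IsClique ↑s ∧ s.card = j ∧ v ∉ s)]
    [DecidablePred (fun s : Finset β => H.IsClique ↑s ∧ s.card = j ∧ v ∈ s)] :
    cnt H j
      = (univ.filter (fun s : Finset β => H.IsClique ↑s ∧ s.card = j ∧ v ∉ s)).card
        + (univ.filter (fun s : Finset β => H.IsClique ↑s ∧ s.card = j ∧ v ∈ s)).card := by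
  classical
  rw [cnt_eq]
  rw [← Finset.card_filter_add_card_filter_not
      (s := univ.filter (fun s : Finset β => H.IsClique ↑s ∧ s.card = j))
      (p := fun s : Finset β => v ∉ s)]
  rw [Finset.filter_filter, Finset.filter_filter]
  congr 1
  · exact congrArg Finset.card (by ext s; simp; tauto)
  · exact congrArg Finset.card (by ext s; simp; tauto)

lemma count_avoid {α β : Type*} [Fintype α] [Fintype β] [DecidableEq α] [DecidableEq β]
    (G : SimpleGraph α) (H : SimpleGraph β) (f : α ↪ β) (v : β) (j : ℕ)
    [DecidablePred (fun s : Finset β => H.IsClique ↑s ∧ s.card = j ∧ v ∉ s)]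
    (hadj : ∀ x y, H.Adj (f x) (f y) ↔ G.Adj x y)
    (hne : ∀ x, f x ≠ v)
    (hsurj : ∀ b, b ≠ v → ∃ a, f a = b) :
    (univ.filter (fun s : Finset β => H.IsClique ↑s ∧ s.card = j ∧ v ∉ s)).card
      = cnt G j := by
  classical
  rw [cnt_eq]
  refine (Finset.card_bij (fun (s : Finset α) (_ : s ∈ univ.filter
      (fun s : Finset α => G.IsClique ↑s ∧ s.card = j)) => s.map f) ?_ ?_ ?_).symm
  · intro s hs
    simp only [mem_filter, mem_univ, true_and] at hs ⊢
    obtain ⟨hcl, hcard⟩ := hs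
    refine ⟨?_, by simp [hcard], ?_⟩
    · rw [SimpleGraph.isClique_iff, Finset.coe_map]
      rintro _ ⟨x, hx, rfl⟩ _ ⟨y, hy, rfl⟩ hxy
      exact (hadj x y).2 (hcl hx hy (fun h => hxy (by rw [h])))
    · intro hv
      obtain ⟨x, _, hx⟩ := Finset.mem_map.1 hv
      exact hne x hx
  · intro s1 h1 s2 h2 h
    exact Finset.map_injective f h
  · intro t ht
    simp only [mem_filter, mem_univ, true_and] at ht
    obtain ⟨hcl, hcard, hv⟩ := ht
    refine ⟨univ.filter (fun a => f a ∈ t), ?_, ?_⟩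
    · simp only [mem_filter, mem_univ, true_and]
      have hmap : (univ.filter (fun a => f a ∈ t)).map f = t := by
        ext b
        simp only [Finset.mem_map, mem_filter, mem_univ, true_and]
        constructor
        · rintro ⟨a, ha, rfl⟩; exact ha
        · intro hb
          obtain ⟨a, rfl⟩ := hsurj b (fun h => hv (h ▸ hb))
          exact ⟨a, hb, rfl⟩
      constructor
      · rw [SimpleGraph.isClique_iff]
        intro x hx y hy hxy
        simp only [Finset.mem_coe, mem_filter, mem_univ, true_and] at hx hy
        exact (hadj x y).1 (hcl hx hy (fun h => hxy (f.injective h)))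
      · calc (univ.filter (fun a => f a ∈ t)).card
            = ((univ.filter (fun a => f a ∈ t)).map f).card := by rw [Finset.card_map]
          _ = t.card := by rw [hmap]
          _ = j := hcard
    · ext b
      simp only [Finset.mem_map, mem_filter, mem_univ, true_and]
      constructor
      · rintro ⟨a, ha, rfl⟩; exact ha
      · intro hb
        obtain ⟨a, rfl⟩ := hsurj b (fun h => hv (h ▸ hb))
        exact ⟨a, hb, rfl⟩

lemma count_contain {α β : Type*} [Fintype α] [Fintype β] [DecidableEq α] [DecidableEq β]
    (G : SimpleGraph α) (H : SimpleGraph β) (f : α ↪ β) (v : β) (j : ℕ)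
    [DecidablePred (fun s : Finset β => H.IsClique ↑s ∧ s.card = j + 1 ∧ v ∈ s)]
    (hadj : ∀ x y, H.Adj (f x) (f y) ↔ G.Adj x y)
    (hadjv : ∀ x, H.Adj v (f x))
    (hsurj : ∀ b, b ≠ v → H.Adj v b → ∃ a, f a = b) :
    (univ.filter (fun s : Finset β => H.IsClique ↑s ∧ s.card = j + 1 ∧ v ∈ s)).card
      = cnt G j := by
  classical
  have hne : ∀ x, f x ≠ v := fun x h => (hadjv x).ne (h.symm)
  have hnotmem : ∀ s : Finset α, v ∉ s.map f := by
    intro s hv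
    obtain ⟨x, _, hx⟩ := Finset.mem_map.1 hv
    exact hne x hx
  rw [cnt_eq]
  refine (Finset.card_bij (fun (s : Finset α) (_ : s ∈ univ.filter
      (fun s : Finset α => G.IsClique ↑s ∧ s.card = j)) => insert v (s.map f)) ?_ ?_ ?_).symm
  · intro s hs
    simp only [mem_filter, mem_univ, true_and] at hs ⊢
    obtain ⟨hcl, hcard⟩ := hs
    refine ⟨?_, ?_, Finset.mem_insert_self _ _⟩
    · rw [SimpleGraph.isClique_iff, Finset.coe_insert]
      intro b1 hb1 b2 hb2 hne12
      rcases Set.mem_insert_iff.1 hb1 with rfl | hb1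
      · rcases Set.mem_insert_iff.1 hb2 with rfl | hb2
        · exact absurd rfl hne12
        · rw [Finset.coe_map] at hb2
          obtain ⟨y, _, rfl⟩ := hb2
          exact hadjv y
      · rcases Set.mem_insert_iff.1 hb2 with hb2v | hb2
        · rw [Finset.coe_map] at hb1
          obtain ⟨x, -, hfx⟩ := hb1
          rw [hb2v, ← hfx]
          exact (hadjv x).symm
        · rw [Finset.coe_map] at hb1 hb2
          obtain ⟨x, hx, rfl⟩ := hb1
          obtain ⟨y, hy, rfl⟩ := hb2
          exact (hadj x y).2 (hcl hx hy (fun h => hne12 (by rw [h])))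
    · rw [Finset.card_insert_of_notMem (hnotmem s), Finset.card_map, hcard]
  · intro s1 h1 s2 h2 h
    have := congrArg (fun t => Finset.erase t v) h
    simp only [Finset.erase_insert (hnotmem s1), Finset.erase_insert (hnotmem s2)] at this
    exact Finset.map_injective f this
  · intro t ht
    simp only [mem_filter, mem_univ, true_and] at ht
    obtain ⟨hcl, hcard, hv⟩ := ht
    have hmap : (univ.filter (fun a => f a ∈ t)).map f = t.erase v := by
      ext b
      simp only [Finset.mem_map, mem_filter, mem_univ, true_and, Finset.mem_erase]
      constructor
      · rintro ⟨a, ha, rfl⟩; exact ⟨hne a, ha⟩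
      · rintro ⟨hbv, hb⟩
        have hadjvb : H.Adj v b := hcl hv hb (fun h => hbv h.symm)
        obtain ⟨a, rfl⟩ := hsurj b hbv hadjvb
        exact ⟨a, hb, rfl⟩
    refine ⟨univ.filter (fun a => f a ∈ t), ?_, ?_⟩
    · simp only [mem_filter, mem_univ, true_and]
      constructor
      · rw [SimpleGraph.isClique_iff]
        intro x hx y hy hxy
        simp only [Finset.mem_coe, mem_filter, mem_univ, true_and] at hx hy
        exact (hadj x y).1 (hcl hx hy (fun h => hxy (f.injective h)))
      · have := congrArg Finset.card hmap
        rw [Finset.card_map, Finset.card_erase_of_mem hv, hcard] at this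
        simpa using this
    · show insert v ((univ.filter (fun a => f a ∈ t)).map f) = t
      rw [hmap, Finset.insert_erase hv]

lemma fin_sub_val_eq_one {n : ℕ} (hn : 2 ≤ n) (a b : Fin n) :
    (a - b).val = 1 ↔ ((a : ℕ) = (b : ℕ) + 1 ∨ ((a : ℕ) = 0 ∧ (b : ℕ) + 1 = n)) := by
  have ha := a.isLt
  have hb := b.isLt
  rw [Fin.sub_def]
  show (n - (b : ℕ) + a) % n = 1 ↔ _
  rcases le_or_gt (b : ℕ) (a : ℕ) with h | h
  · have e : n - (b : ℕ) + a = n + ((a : ℕ) - b) := by omega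
    rw [e, Nat.add_mod_left, Nat.mod_eq_of_lt (by omega)]
    omega
  · rw [Nat.mod_eq_of_lt (by omega)]
    omega

lemma cycle_compl_adj {n : ℕ} (hn : 2 ≤ n) (a b : Fin n) :
    ((cycleGraph n)ᶜ).Adj a b ↔ ((a : ℕ) ≠ (b : ℕ) ∧
      ¬((a : ℕ) = (b : ℕ) + 1 ∨ (b : ℕ) = (a : ℕ) + 1 ∨
        ((a : ℕ) = 0 ∧ (b : ℕ) + 1 = n) ∨ ((b : ℕ) = 0 ∧ (a : ℕ) + 1 = n))) := by
  rw [SimpleGraph.compl_adj]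
  have : (cycleGraph n).Adj a b ↔
      ((a : ℕ) = (b : ℕ) + 1 ∨ (b : ℕ) = (a : ℕ) + 1 ∨
        ((a : ℕ) = 0 ∧ (b : ℕ) + 1 = n) ∨ ((b : ℕ) = 0 ∧ (a : ℕ) + 1 = n)) := by
    show (a ≠ b ∧ ((a - b : Fin n).val = 1 ∨ (b - a : Fin n).val = 1)) ↔ _
    rw [Fin.ne_iff_vne, fin_sub_val_eq_one hn a b, fin_sub_val_eq_one hn b a]
    have ha := a.isLt
    have hb := b.isLt
    omega
  rw [this, Fin.ne_iff_vne]

lemma path_compl_adj {n : ℕ} (a b : Fin n) :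
    ((pathGraph' n)ᶜ).Adj a b ↔ ((a : ℕ) ≠ (b : ℕ) ∧
      ¬((a : ℕ) + 1 = (b : ℕ) ∨ (b : ℕ) + 1 = (a : ℕ))) := by
  rw [SimpleGraph.compl_adj, Fin.ne_iff_vne]
  rfl

lemma pathB (k m : ℕ) :
    cnt ((pathGraph' (k + 2))ᶜ) (m + 1)
      = cnt ((pathGraph' (k + 1))ᶜ) (m + 1) + cnt ((pathGraph' k)ᶜ) m := by
  classical
  set v : Fin (k + 2) := ⟨k + 1, by omega⟩ with hv
  rw [cnt_split ((pathGraph' (k + 2))ᶜ) v (m + 1)]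
  congr 1
  · refine count_avoid ((pathGraph' (k + 1))ᶜ) ((pathGraph' (k + 2))ᶜ)
      (Fin.castLEEmb (by omega)) v (m + 1) ?_ ?_ ?_
    · intro x y
      rw [path_compl_adj, path_compl_adj]
      simp only [Fin.castLEEmb_apply, Fin.coe_castLE]
    · intro x
      have := x.isLt
      simp only [Fin.castLEEmb_apply, hv, Fin.ne_iff_vne, Fin.coe_castLE]
      omega
    · intro b hb
      have hb' : (b : ℕ) < k + 1 := by
        have := b.isLt
        rw [hv, Fin.ne_iff_vne] at hb
        simp only at hb
        omega
      exact ⟨⟨b, hb'⟩, by ext; simp⟩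
  · refine count_contain ((pathGraph' k)ᶜ) ((pathGraph' (k + 2))ᶜ)
      (Fin.castLEEmb (by omega)) v m ?_ ?_ ?_
    · intro x y
      rw [path_compl_adj, path_compl_adj]
      simp only [Fin.castLEEmb_apply, Fin.coe_castLE]
    · intro x
      have := x.isLt
      rw [path_compl_adj]
      simp only [Fin.castLEEmb_apply, Fin.coe_castLE, hv]
      omega
    · intro b hbv hadj
      rw [path_compl_adj] at hadj
      rw [hv, Fin.ne_iff_vne] at hbv
      simp only [hv, Fin.val_mk, and_true, true_and, or_true, true_or, and_false, false_and, or_false, false_or] at hadj hbv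
      have := b.isLt
      have hb' : (b : ℕ) < k := by omega
      exact ⟨⟨b, hb'⟩, by ext; simp⟩

lemma cycleA (k m : ℕ) :
    cnt ((cycleGraph (k + 3))ᶜ) (m + 1)
      = cnt ((pathGraph' (k + 2))ᶜ) (m + 1) + cnt ((pathGraph' k)ᶜ) m := by
  classical
  set v : Fin (k + 3) := ⟨k + 2, by omega⟩ with hv
  rw [cnt_split ((cycleGraph (k + 3))ᶜ) v (m + 1)]
  congr 1
  · refine count_avoid ((pathGraph' (k + 2))ᶜ) ((cycleGraph (k + 3))ᶜ)
      (Fin.castLEEmb (by omega)) v (m + 1) ?_ ?_ ?_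
    · intro x y
      rw [cycle_compl_adj (by omega), path_compl_adj]
      have hx := x.isLt
      have hy := y.isLt
      simp only [Fin.castLEEmb_apply, Fin.coe_castLE]
      omega
    · intro x
      have := x.isLt
      simp only [Fin.castLEEmb_apply, hv, Fin.ne_iff_vne, Fin.coe_castLE]
      omega
    · intro b hb
      have hb' : (b : ℕ) < k + 2 := by
        have := b.isLt
        rw [hv, Fin.ne_iff_vne] at hb
        simp only at hb
        omega
      exact ⟨⟨b, hb'⟩, by ext; simp⟩
  · refine count_contain ((pathGraph' k)ᶜ) ((cycleGraph (k + 3))ᶜ)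
      ⟨fun x => ⟨(x : ℕ) + 1, by omega⟩, @id (Function.Injective _) (fun a b h => by
        simpa [Fin.ext_iff] using h)⟩ v m ?_ ?_ ?_
    · intro x y
      rw [cycle_compl_adj (by omega), path_compl_adj]
      have hx := x.isLt
      have hy := y.isLt
      simp only [Function.Embedding.coeFn_mk]
      omega
    · intro x
      have := x.isLt
      rw [cycle_compl_adj (by omega)]
      simp only [Function.Embedding.coeFn_mk, hv]
      omega
    · intro b hbv hadj
      rw [cycle_compl_adj (by omega)] at hadj
      rw [hv, Fin.ne_iff_vne] at hbv
      simp only [hv, Fin.val_mk, and_true, true_and, or_true, true_or, and_false, false_and, or_false, false_or] at hadj hbv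
      have := b.isLt
      have hb' : 1 ≤ (b : ℕ) ∧ (b : ℕ) ≤ k := by omega
      exact ⟨⟨(b : ℕ) - 1, by omega⟩, by
        ext
        simp only [Function.Embedding.coeFn_mk]
        omega⟩

/-- Hyper-Pascal relation for the f-vector of cycle-graph complements:
`f_k(G_n) = f_k(G_{n-1}) + f_{k-1}(G_{n-2})`, stated for the numbers of `j`-element cliques. -/
theorem hyperPascal (n : ℕ) (hn : 5 ≤ n) (j : ℕ) (hj : 1 ≤ j) :
    cliqueCount ((cycleGraph n)ᶜ) j =
      cliqueCount ((cycleGraph (n - 1))ᶜ) j + cliqueCount ((cycleGraph (n - 2))ᶜ) (j - 1) := by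
  obtain ⟨k, rfl⟩ : ∃ k, n = k + 5 := ⟨n - 5, by omega⟩
  obtain ⟨m, rfl⟩ : ∃ m, j = m + 1 := ⟨j - 1, by omega⟩
  have e1 : k + 5 - 1 = k + 4 := by omega
  have e2 : k + 5 - 2 = k + 3 := by omega
  have e3 : m + 1 - 1 = m := by omega
  rw [e1, e2, e3, cliqueCount_eq_cnt, cliqueCount_eq_cnt, cliqueCount_eq_cnt]
  have A1 := cycleA (k + 2) m
  have A2 := cycleA (k + 1) m
  have B1 := pathB (k + 2) m
  have hk1 : k + 2 + 3 = k + 5 := by omega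
  have hk2 : k + 1 + 3 = k + 4 := by omega
  have hk3 : k + 2 + 2 = k + 4 := by omega
  have hk4 : k + 1 + 2 = k + 3 := by omega
  rw [hk1, hk3] at A1
  rw [hk2, hk4] at A2
  rw [hk3, hk4] at B1
  cases m with
  | zero =>
    have h0a := cnt_zero ((pathGraph' (k + 2))ᶜ)
    have h0b := cnt_zero ((pathGraph' (k + 1))ᶜ)
    have h0c := cnt_zero ((cycleGraph (k + 3))ᶜ)
    omega
  | succ m' =>
    have A3 := cycleA k m'
    have B2 := pathB k m'
    omega
end

section
/- Let N(G) denote the total number of nonempty cliques of a finite simple graph G. For every n ≥ 5, the complements G_n of the cycle graphs satisfy the hyper-Fibonacci recursion N(G_n) = N(G_{n-1}) + N(G_{n-2}) + 1. -/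
/-- Independent subsets of the path on `{0,...,n-1}`. -/
def Pset (n : ℕ) : Finset (Finset ℕ) :=
  (Finset.range n).powerset.filter (fun s => ∀ i ∈ s, i + 1 ∉ s)

/-- Independent subsets of the cycle on `{0,...,n-1}`. -/
def Cset (n : ℕ) : Finset (Finset ℕ) :=
  (Finset.range n).powerset.filter
    (fun s => (∀ i ∈ s, i + 1 ∉ s) ∧ ¬(0 ∈ s ∧ n - 1 ∈ s))

lemma mem_Pset {n : ℕ} {s : Finset ℕ} :
    s ∈ Pset n ↔ s ⊆ Finset.range n ∧ ∀ i ∈ s, i + 1 ∉ s := by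
  simp [Pset]

lemma mem_Cset {n : ℕ} {s : Finset ℕ} :
    s ∈ Cset n ↔ s ⊆ Finset.range n ∧ (∀ i ∈ s, i + 1 ∉ s) ∧ ¬(0 ∈ s ∧ n - 1 ∈ s) := by
  simp [Cset, and_assoc]

lemma Pset_rec (n : ℕ) : (Pset (n + 2)).card = (Pset (n + 1)).card + (Pset n).card := by
  classical
  have hsplit :
      ((Pset (n + 2)).filter (fun s => ¬ (n + 1) ∈ s)).card +
        ((Pset (n + 2)).filter (fun s => (n + 1) ∈ s)).card = (Pset (n + 2)).card := by
    rw [Nat.add_comm]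
    exact Finset.card_filter_add_card_filter_not (fun s => (n + 1) ∈ s)
  have h1 : (Pset (n + 2)).filter (fun s => ¬ (n + 1) ∈ s) = Pset (n + 1) := by
    ext s
    simp only [Finset.mem_filter, mem_Pset]
    constructor
    · rintro ⟨⟨hsub, hind⟩, hni⟩
      refine ⟨fun i hi => ?_, hind⟩
      have h2 := hsub hi
      simp only [Finset.mem_range] at h2 ⊢
      rcases Nat.lt_or_ge i (n+1) with h | h
      · exact h
      · exfalso; apply hni; have he : i = n + 1 := by omega
        rwa [he] at hi
    · rintro ⟨hsub, hind⟩
      refine ⟨⟨fun i hi => ?_, hind⟩, fun hc => ?_⟩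
      · have := hsub hi; simp only [Finset.mem_range] at this ⊢; omega
      · have := hsub hc; simp at this
  have h2 : ((Pset (n + 2)).filter (fun s => (n + 1) ∈ s)).card = (Pset n).card := by
    apply Finset.card_nbij' (fun s => s.erase (n + 1)) (fun t => insert (n + 1) t)
    · intro s hs
      simp only [Finset.mem_coe, Finset.mem_filter, mem_Pset] at hs
      obtain ⟨⟨hsub, hind⟩, hmem⟩ := hs
      rw [Finset.mem_coe, mem_Pset]
      constructor
      · intro i hi
        rw [Finset.mem_erase] at hi
        have := hsub hi.2
        simp only [Finset.mem_range] at this ⊢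
        have hn : i ≠ n := by
          rintro rfl
          exact hind _ hi.2 hmem
        have := hi.1
        omega
      · intro i hi
        rw [Finset.mem_erase] at hi ⊢
        intro hc
        exact hind i hi.2 hc.2
    · intro t ht
      rw [Finset.mem_coe, mem_Pset] at ht
      obtain ⟨hsub, hind⟩ := ht
      simp only [Finset.mem_coe, Finset.mem_filter, mem_Pset]
      refine ⟨⟨fun i hi => ?_, fun i hi hc => ?_⟩, by simp⟩
      · rcases Finset.mem_insert.1 hi with rfl | h
        · simp
        · have := hsub h; simp only [Finset.mem_range] at this ⊢; omega
      · rcases Finset.mem_insert.1 hi with rfl | h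
        · rcases Finset.mem_insert.1 hc with h' | h'
          · omega
          · have := hsub h'; simp only [Finset.mem_range] at this; omega
        · rcases Finset.mem_insert.1 hc with h' | h'
          · have := hsub h; simp only [Finset.mem_range] at this; omega
          · exact hind i h h'
    · intro s hs
      simp only [Finset.mem_coe, Finset.mem_filter] at hs
      exact Finset.insert_erase hs.2
    · intro t ht
      rw [Finset.mem_coe, mem_Pset] at ht
      apply Finset.erase_insert
      intro hc
      have := ht.1 hc
      simp at this
  rw [h1] at hsplit
  omega

lemma Cset_card (n : ℕ) (hn : 3 ≤ n) :
    (Cset n).card = (Pset (n - 1)).card + (Pset (n - 3)).card := by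
  classical
  have hsplit :
      ((Cset n).filter (fun s => ¬ 0 ∈ s)).card +
        ((Cset n).filter (fun s => 0 ∈ s)).card = (Cset n).card := by
    rw [Nat.add_comm]
    exact Finset.card_filter_add_card_filter_not (fun s => 0 ∈ s)
  have hA : ((Cset n).filter (fun s => ¬ 0 ∈ s)).card = (Pset (n - 1)).card := by
    apply Finset.card_nbij' (fun s => s.image (· - 1)) (fun t => t.image (· + 1))
    · intro s hs
      simp only [Finset.mem_coe, Finset.mem_filter, mem_Cset] at hs
      obtain ⟨⟨hsub, hind, _⟩, h0⟩ := hs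
      rw [Finset.mem_coe, mem_Pset]
      constructor
      · intro a ha
        simp only [Finset.mem_image] at ha
        obtain ⟨i, hi, rfl⟩ := ha
        have h1 := hsub hi
        simp only [Finset.mem_range] at h1 ⊢
        have : i ≠ 0 := fun h => h0 (h ▸ hi)
        omega
      · intro a ha hc
        simp only [Finset.mem_image] at ha hc
        obtain ⟨i, hi, hie⟩ := ha
        obtain ⟨j, hj, hje⟩ := hc
        have hi0 : i ≠ 0 := fun h => h0 (h ▸ hi)
        have hj0 : j ≠ 0 := fun h => h0 (h ▸ hj)
        have : j = i + 1 := by omega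
        exact hind i hi (this ▸ hj)
    · intro t ht
      rw [Finset.mem_coe, mem_Pset] at ht
      obtain ⟨hsub, hind⟩ := ht
      simp only [Finset.mem_coe, Finset.mem_filter, mem_Cset]
      refine ⟨⟨?_, ?_, ?_⟩, ?_⟩
      · intro b hb
        simp only [Finset.mem_image] at hb
        obtain ⟨a, ha, rfl⟩ := hb
        have := hsub ha
        simp only [Finset.mem_range] at this ⊢
        omega
      · intro b hb hc
        simp only [Finset.mem_image] at hb hc
        obtain ⟨a, ha, hae⟩ := hb
        obtain ⟨a', ha', hae'⟩ := hc
        have : a' = a + 1 := by omega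
        exact hind a ha (this ▸ ha')
      · rintro ⟨h0, _⟩
        simp only [Finset.mem_image] at h0
        obtain ⟨a, _, ha⟩ := h0
        omega
      · intro h0
        simp only [Finset.mem_image] at h0
        obtain ⟨a, _, ha⟩ := h0
        omega
    · intro s hs
      simp only [Finset.mem_coe, Finset.mem_filter, mem_Cset] at hs
      obtain ⟨⟨hsub, _, _⟩, h0⟩ := hs
      beta_reduce
      rw [Finset.image_image]
      have : ∀ x ∈ s, ((· + 1) ∘ (· - 1)) x = id x := by
        intro x hx
        have : x ≠ 0 := fun h => h0 (h ▸ hx)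
        simp only [Function.comp_apply, id_eq]
        omega
      rw [Finset.image_congr this, Finset.image_id]
    · intro t _
      beta_reduce
      rw [Finset.image_image]
      have : ∀ x ∈ t, ((· - 1) ∘ (· + 1)) x = id x := by
        intro x _
        simp
      rw [Finset.image_congr this, Finset.image_id]
  have hB : ((Cset n).filter (fun s => 0 ∈ s)).card = (Pset (n - 3)).card := by
    apply Finset.card_nbij' (fun s => (s.erase 0).image (· - 2))
      (fun t => insert 0 (t.image (· + 2)))
    · intro s hs
      simp only [Finset.mem_coe, Finset.mem_filter, mem_Cset] at hs
      obtain ⟨⟨hsub, hind, hcyc⟩, h0⟩ := hs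
      have h1 : (1 : ℕ) ∉ s := hind 0 h0
      have hn1 : (n - 1 : ℕ) ∉ s := fun h => hcyc ⟨h0, h⟩
      have hkey : ∀ i ∈ s, i ≠ 0 → 2 ≤ i ∧ i ≤ n - 2 := by
        intro i hi hi0
        have := hsub hi
        simp only [Finset.mem_range] at this
        have hine : i ≠ 1 := fun h => h1 (h ▸ hi)
        have hinn : i ≠ n - 1 := fun h => hn1 (h ▸ hi)
        omega
      rw [Finset.mem_coe, mem_Pset]
      constructor
      · intro a ha
        simp only [Finset.mem_image, Finset.mem_erase] at ha
        obtain ⟨i, ⟨hi0, hi⟩, rfl⟩ := ha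
        have := hkey i hi hi0
        simp only [Finset.mem_range]
        omega
      · intro a ha hc
        simp only [Finset.mem_image, Finset.mem_erase] at ha hc
        obtain ⟨i, ⟨hi0, hi⟩, hie⟩ := ha
        obtain ⟨j, ⟨hj0, hj⟩, hje⟩ := hc
        have h2 := hkey i hi hi0
        have h3 := hkey j hj hj0
        have : j = i + 1 := by omega
        exact hind i hi (this ▸ hj)
    · intro t ht
      rw [Finset.mem_coe, mem_Pset] at ht
      obtain ⟨hsub, hind⟩ := ht
      have himg : ∀ b ∈ t.image (· + 2), 2 ≤ b ∧ b ≤ n - 2 := by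
        intro b hb
        simp only [Finset.mem_image] at hb
        obtain ⟨a, ha, rfl⟩ := hb
        have := hsub ha
        simp only [Finset.mem_range] at this
        omega
      simp only [Finset.mem_coe, Finset.mem_filter, mem_Cset]
      refine ⟨⟨?_, ?_, ?_⟩, by simp⟩
      · intro b hb
        rcases Finset.mem_insert.1 hb with rfl | hb
        · simp only [Finset.mem_range]; omega
        · have := himg b hb
          simp only [Finset.mem_range]
          omega
      · intro b hb hc
        rcases Finset.mem_insert.1 hb with rfl | hb
        · rcases Finset.mem_insert.1 hc with h' | h'
          · omega
          · have := himg _ h'; omega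
        · rcases Finset.mem_insert.1 hc with h' | h'
          · have := himg _ hb; omega
          · simp only [Finset.mem_image] at hb h'
            obtain ⟨a, ha, hae⟩ := hb
            obtain ⟨a', ha', hae'⟩ := h'
            have : a' = a + 1 := by omega
            exact hind a ha (this ▸ ha')
      · rintro ⟨_, hn1⟩
        rcases Finset.mem_insert.1 hn1 with h' | h'
        · omega
        · have := himg _ h'; omega
    · intro s hs
      simp only [Finset.mem_coe, Finset.mem_filter, mem_Cset] at hs
      obtain ⟨⟨hsub, hind, hcyc⟩, h0⟩ := hs
      have h1 : (1 : ℕ) ∉ s := hind 0 h0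
      beta_reduce
      rw [Finset.image_image]
      have he : ∀ x ∈ s.erase 0, ((· + 2) ∘ (· - 2)) x = id x := by
        intro x hx
        rw [Finset.mem_erase] at hx
        have hx1 : x ≠ 1 := fun h => h1 (h ▸ hx.2)
        have hx0 := hx.1
        simp only [Function.comp_apply, id_eq]
        omega
      rw [Finset.image_congr he, Finset.image_id, Finset.insert_erase h0]
    · intro t ht
      rw [Finset.mem_coe, mem_Pset] at ht
      have h0 : (0 : ℕ) ∉ t.image (· + 2) := by
        simp only [Finset.mem_image]
        rintro ⟨a, _, ha⟩
        omega
      beta_reduce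
      rw [Finset.erase_insert h0, Finset.image_image]
      have : ∀ x ∈ t, ((· - 2) ∘ (· + 2)) x = id x := by
        intro x _; simp
      rw [Finset.image_congr this, Finset.image_id]
  omega

lemma mem_cliquesOf {V : Type*} [Finite V] (G : SimpleGraph V) (s : Finset V) :
    s ∈ cliquesOf G ↔ s.Nonempty ∧ G.IsClique (s : Set V) := by
  classical
  unfold cliquesOf
  simp [Finset.mem_filter]

lemma sub_val_eq_one (n : ℕ) (hn : 2 ≤ n) (i j : Fin n) :
    ((j - i : Fin n)).val = 1 ↔ (j : ℕ) = ((i : ℕ) + 1) % n := by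
  haveI : NeZero n := ⟨by omega⟩
  have hm : 1 % n = 1 := Nat.mod_eq_of_lt (by omega)
  have hval : ((i + 1 : Fin n) : ℕ) = ((i : ℕ) + 1) % n := by
    rw [Fin.val_add, Fin.val_one', hm]
  constructor
  · intro h
    have h1 : (j - i : Fin n) = 1 := by
      apply Fin.ext
      rw [h, Fin.val_one', hm]
    have h2 : j = i + 1 := by
      rw [sub_eq_iff_eq_add] at h1
      rw [h1]; abel
    rw [h2, hval]
  · intro h
    have h2 : j = i + 1 := by
      apply Fin.ext
      rw [hval]
      exact h
    rw [h2]
    have h3 : (i + 1 - i : Fin n) = 1 := by abel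
    rw [h3, Fin.val_one', hm]

lemma card_bridge (n : ℕ) (hn : 3 ≤ n) :
    (Cset n).card = (cliquesOf ((cycleGraph n)ᶜ)).card + 1 := by
  classical
  have h₀ : (∅ : Finset (Fin n)) ∉ cliquesOf ((cycleGraph n)ᶜ) := by
    simp [mem_cliquesOf]
  rw [← Finset.card_insert_of_notMem h₀]
  have bound : ∀ s : Finset ℕ, s ∈ Cset n → ∀ m ∈ s, m < n := by
    intro s hs m hm
    have := (mem_Cset.1 hs).1 hm
    simpa using this
  -- key: no cyclically adjacent pair in a member of Cset n
  have key : ∀ s ∈ Cset n, ∀ a ∈ s, ∀ b ∈ s, b ≠ (a + 1) % n := by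
    intro s hs a ha b hb hab
    obtain ⟨hsub, hind, hcyc⟩ := mem_Cset.1 hs
    have ha' : a < n := by simpa using hsub ha
    have hb' : b < n := by simpa using hsub hb
    rcases Nat.lt_or_ge (a + 1) n with h | h
    · rw [Nat.mod_eq_of_lt h] at hab
      exact hind a ha (hab ▸ hb)
    · have han : a = n - 1 := by omega
      have : (a + 1) % n = 0 := by
        have : a + 1 = n := by omega
        simp [this]
      rw [this] at hab
      exact hcyc ⟨hab ▸ hb, han ▸ ha⟩
  apply Finset.card_bij (fun s hs => Finset.attachFin s (bound s hs))
  · intro s hs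
    rcases eq_or_ne s ∅ with rfl | hne
    · have : Finset.attachFin (∅ : Finset ℕ) (bound ∅ hs) = ∅ := by
        ext a; simp [Finset.mem_attachFin]
      rw [this]
      exact Finset.mem_insert_self _ _
    · apply Finset.mem_insert_of_mem
      rw [mem_cliquesOf]
      constructor
      · obtain ⟨a, ha⟩ := Finset.nonempty_iff_ne_empty.2 hne
        exact ⟨⟨a, bound s hs a ha⟩, by simp [Finset.mem_attachFin, ha]⟩
      · intro x hx y hy hxy
        simp only [Finset.coe_sort_coe, Finset.mem_coe, Finset.mem_attachFin] at hx hy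
        rw [SimpleGraph.compl_adj]
        refine ⟨hxy, ?_⟩
        rintro ⟨-, h | h⟩
        · rw [sub_val_eq_one n (by omega)] at h
          exact key s hs _ hy _ hx h
        · rw [sub_val_eq_one n (by omega)] at h
          exact key s hs _ hx _ hy h
  · intro s hs s' hs' heq
    ext a
    constructor
    · intro ha
      have : (⟨a, bound s hs a ha⟩ : Fin n) ∈ Finset.attachFin s (bound s hs) := by
        simp [Finset.mem_attachFin, ha]
      rw [heq] at this
      simpa [Finset.mem_attachFin] using this
    · intro ha
      have : (⟨a, bound s' hs' a ha⟩ : Fin n) ∈ Finset.attachFin s' (bound s' hs') := by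
        simp [Finset.mem_attachFin, ha]
      rw [← heq] at this
      simpa [Finset.mem_attachFin] using this
  · intro t ht
    refine ⟨t.image Fin.val, ?_, ?_⟩
    · rw [mem_Cset]
      refine ⟨?_, ?_, ?_⟩
      · intro a ha
        simp only [Finset.mem_image] at ha
        obtain ⟨x, _, rfl⟩ := ha
        simp [x.isLt]
      · intro a ha hc
        simp only [Finset.mem_image] at ha hc
        obtain ⟨x, hx, rfl⟩ := ha
        obtain ⟨y, hy, hye⟩ := hc
        rcases Finset.mem_insert.1 ht with rfl | ht'
        · simp at hx
        · have hclique := (mem_cliquesOf _ _ |>.1 ht').2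
          have hxy : x ≠ y := by
            intro h; rw [h] at hye; omega
          have := hclique (Finset.mem_coe.2 hx) (Finset.mem_coe.2 hy) hxy
          rw [SimpleGraph.compl_adj] at this
          apply this.2
          refine ⟨hxy, Or.inr ?_⟩
          rw [sub_val_eq_one n (by omega)]
          have hlt : (x : ℕ) + 1 < n := by rw [← hye]; exact y.isLt
          rw [hye, Nat.mod_eq_of_lt hlt]
      · rintro ⟨h0, hn1⟩
        simp only [Finset.mem_image] at h0 hn1
        obtain ⟨y, hy, hye⟩ := h0
        obtain ⟨x, hx, hxe⟩ := hn1
        rcases Finset.mem_insert.1 ht with rfl | ht'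
        · simp at hx
        · have hclique := (mem_cliquesOf _ _ |>.1 ht').2
          have hxy : x ≠ y := by
            intro h; rw [h] at hxe; omega
          have := hclique (Finset.mem_coe.2 hx) (Finset.mem_coe.2 hy) hxy
          rw [SimpleGraph.compl_adj] at this
          apply this.2
          refine ⟨hxy, Or.inr ?_⟩
          rw [sub_val_eq_one n (by omega)]
          have hxn : (x : ℕ) + 1 = n := by omega
          rw [hye, hxn, Nat.mod_self]
    · ext x
      simp only [Finset.mem_attachFin, Finset.mem_image]
      constructor
      · rintro ⟨y, hy, hye⟩
        have : y = x := Fin.ext hye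
        rwa [this] at hy
      · intro hx
        exact ⟨x, hx, rfl⟩

/-- Hyper-Fibonacci recursion for the total number of nonempty cliques of `G_n = (C_n)ᶜ`. -/
theorem hyperFibonacci (n : ℕ) (hn : 5 ≤ n) :
    (cliquesOf ((cycleGraph n)ᶜ)).card =
      (cliquesOf ((cycleGraph (n - 1))ᶜ)).card + (cliquesOf ((cycleGraph (n - 2))ᶜ)).card + 1 := by
  obtain ⟨m, rfl⟩ : ∃ m, n = m + 5 := ⟨n - 5, by omega⟩
  rw [show m + 5 - 1 = m + 4 by omega, show m + 5 - 2 = m + 3 by omega]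
  have b0 := card_bridge (m + 5) (by omega)
  have b1 := card_bridge (m + 4) (by omega)
  have b2 := card_bridge (m + 3) (by omega)
  have c0 := Cset_card (m + 5) (by omega)
  have c1 := Cset_card (m + 4) (by omega)
  have c2 := Cset_card (m + 3) (by omega)
  rw [show m + 5 - 1 = m + 4 by omega, show m + 5 - 3 = m + 2 by omega] at c0
  rw [show m + 4 - 1 = m + 3 by omega, show m + 4 - 3 = m + 1 by omega] at c1
  rw [show m + 3 - 1 = m + 2 by omega, show m + 3 - 3 = m by omega] at c2
  have p3 : (Pset (m + 4)).card = (Pset (m + 3)).card + (Pset (m + 2)).card := Pset_rec (m + 2)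
  have p1 : (Pset (m + 2)).card = (Pset (m + 1)).card + (Pset m).card := Pset_rec m
  omega
end

section
/- Let t be a real number with t > -1/4 and set u = √(4t+1). Then for every n ≥ 3 the simplex generating polynomial of G_n = (C_n)ᶜ has the closed (Binet-type) form f_{G_n}(t) = ((1+u)^n + (1-u)^n)/2^n, and for every n ≥ 1 the simplex generating polynomial of G_n^+ = (P_n)ᶜ has the closed form f_{G_n^+}(t) = ((1+u)^{n+2} - (1-u)^{n+2})/(2^{n+2}·u). -/
open Finset

def okN (n : ℕ) : Finset (Finset ℕ) :=
  (Finset.range n).powerset.filter (fun s => ∀ i ∈ s, i + 1 ∉ s)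

def okC (n : ℕ) : Finset (Finset ℕ) :=
  (Finset.range n).powerset.filter (fun s => ∀ i ∈ s, (i + 1) % n ∉ s)

noncomputable def Pp (n : ℕ) (t : ℝ) : ℝ := ∑ s ∈ okN n, t ^ s.card

lemma Pp_zero (t : ℝ) : Pp 0 t = 1 := by
  have h : okN 0 = {∅} := by decide
  rw [Pp, h]
  simp

lemma Pp_one (t : ℝ) : Pp 1 t = 1 + t := by
  have h : okN 1 = {∅, {0}} := by decide
  rw [Pp, h]
  rw [Finset.sum_insert (by decide), Finset.sum_singleton]
  simp

lemma Pp_rec (n : ℕ) (t : ℝ) : Pp (n + 2) t = Pp (n + 1) t + t * Pp n t := by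
  rw [Pp, ← Finset.sum_filter_add_sum_filter_not (okN (n+2)) (fun s => (n+1) ∈ s)]
  have h1 : (okN (n+2)).filter (fun s => ¬ (n+1) ∈ s) = okN (n+1) := by
    ext s
    simp only [okN, mem_filter, mem_powerset]
    constructor
    · rintro ⟨⟨hs, hc⟩, hn⟩
      refine ⟨fun a ha => ?_, hc⟩
      have := hs ha
      simp only [mem_range] at this ⊢
      rcases Nat.lt_succ_iff_lt_or_eq.mp this with h | h
      · exact h
      · exact absurd (h ▸ ha) hn
    · rintro ⟨hs, hc⟩
      refine ⟨⟨hs.trans ?_, hc⟩, fun h => by simpa using hs h⟩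
      exact Finset.range_subset_range.mpr (by omega)
  have h2 : ∑ s ∈ (okN (n+2)).filter (fun s => (n+1) ∈ s), t ^ s.card
      = t * Pp n t := by
    rw [Pp, Finset.mul_sum]
    refine Finset.sum_nbij' (t := okN n) (g := fun s => t * t ^ s.card)
      (fun s => s.erase (n+1)) (fun s => insert (n+1) s) ?_ ?_ ?_ ?_ ?_
    · intro s hs
      simp only [okN, mem_filter, mem_powerset] at hs ⊢
      obtain ⟨⟨hsub, hcond⟩, hmem⟩ := hs
      constructor
      · intro a ha
        have ha' := Finset.mem_of_mem_erase ha
        have hane := Finset.ne_of_mem_erase ha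
        have := hsub ha'
        simp only [mem_range] at this ⊢
        rcases Nat.lt_or_ge a n with h | h
        · exact h
        · exfalso
          have han : a = n ∨ a = n + 1 := by omega
          rcases han with rfl | rfl
          · exact hcond a ha' hmem
          · exact hane rfl
      · intro a ha
        exact fun h => hcond a (Finset.mem_of_mem_erase ha) (Finset.mem_of_mem_erase h)
    · intro s hs
      simp only [okN, mem_filter, mem_powerset] at hs ⊢
      obtain ⟨hsub, hcond⟩ := hs
      refine ⟨⟨?_, ?_⟩, Finset.mem_insert_self _ _⟩
      · intro a ha
        rcases Finset.mem_insert.mp ha with h | h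
        · simp [h]
        · have := hsub h; simp only [mem_range] at this ⊢; omega
      · intro a ha hb
        rcases Finset.mem_insert.mp ha with h | h
        · rcases Finset.mem_insert.mp hb with h' | h'
          · omega
          · have := hsub h'; simp only [mem_range] at this; omega
        · rcases Finset.mem_insert.mp hb with h' | h'
          · have := hsub h; simp only [mem_range] at this; omega
          · exact hcond a h h'
    · intro s hs
      simp only [mem_filter] at hs
      exact Finset.insert_erase hs.2
    · intro s hs
      simp only [okN, mem_filter, mem_powerset] at hs
      refine Finset.erase_insert (fun h => ?_)
      have := hs.1 h; simp only [mem_range] at this; omega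
    · intro s hs
      simp only [mem_filter] at hs
      rw [Finset.card_erase_of_mem hs.2, ← pow_succ']
      have : 1 ≤ s.card := Finset.card_pos.mpr ⟨n+1, hs.2⟩
      congr 1
      omega
  rw [h1, h2, show (∑ s ∈ okN (n+1), t ^ s.card) = Pp (n+1) t from rfl]
  ring

open scoped Classical in
lemma fgen_eq {n : ℕ} (G : SimpleGraph (Fin n)) (t : ℝ) :
    fgen G t = ∑ s ∈ Finset.univ.filter
      (fun s : Finset (Fin n) => G.IsClique (s : Set (Fin n))), t ^ s.card := by
  classical
  have hcl : cliquesOf G = Finset.univ.filter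
      (fun s : Finset (Fin n) => s.Nonempty ∧ G.IsClique (s : Set (Fin n))) := by
    unfold cliquesOf
    congr 1
    exact congrArg (fun i => @Finset.univ (Finset (Fin n)) i) (Subsingleton.elim _ _)
  rw [fgen, hcl]
  have hsplit : Finset.univ.filter
      (fun s : Finset (Fin n) => G.IsClique (s : Set (Fin n)))
      = insert ∅ (Finset.univ.filter
        (fun s : Finset (Fin n) => s.Nonempty ∧ G.IsClique (s : Set (Fin n)))) := by
    ext s
    simp only [mem_filter, mem_univ, true_and, mem_insert]
    constructor
    · intro h
      rcases Finset.eq_empty_or_nonempty s with rfl | hne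
      · exact Or.inl rfl
      · exact Or.inr ⟨hne, h⟩
    · rintro (rfl | ⟨_, h⟩)
      · simp [SimpleGraph.IsClique]
      · exact h
  rw [hsplit, Finset.sum_insert (by simp)]
  simp

open scoped Classical in
lemma path_transfer (n : ℕ) (t : ℝ) : fgen ((pathGraph' n)ᶜ) t = Pp n t := by
  rw [fgen_eq, Pp]
  refine Finset.sum_nbij' (fun s => s.map Fin.valEmbedding)
    (fun s => Finset.univ.filter (fun i : Fin n => (i : ℕ) ∈ s)) ?_ ?_ ?_ ?_ ?_
  · intro s hs
    simp only [mem_filter, mem_univ, true_and] at hs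
    simp only [okN, mem_filter, mem_powerset]
    constructor
    · intro a ha
      simp only [Finset.mem_map, Fin.valEmbedding_apply] at ha
      obtain ⟨i, _, rfl⟩ := ha
      exact Finset.mem_range.mpr i.isLt
    · intro a ha hb
      simp only [Finset.mem_map, Fin.valEmbedding_apply] at ha hb
      obtain ⟨i, hi, rfl⟩ := ha
      obtain ⟨j, hj, hij⟩ := hb
      have hne : i ≠ j := by
        intro h; subst h; omega
      have := hs hi hj (by simpa using hne)
      simp only [SimpleGraph.compl_adj, pathGraph'] at this
      exact this.2 (Or.inl hij.symm)
  · intro s hs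
    simp only [okN, mem_filter, mem_powerset] at hs
    simp only [mem_filter, mem_univ, true_and]
    intro i hi j hj hne
    simp only [Finset.mem_coe, mem_filter, mem_univ, true_and] at hi hj
    refine ⟨hne, ?_⟩
    simp only [pathGraph']
    rintro (h | h)
    · exact hs.2 i hi (h ▸ hj)
    · exact hs.2 j hj (h ▸ hi)
  · intro s hs
    ext i
    simp [Fin.val_injective.eq_iff]
  · intro s hs
    simp only [okN, mem_filter, mem_powerset] at hs
    ext a
    simp only [Finset.mem_map, mem_filter, mem_univ, true_and, Fin.valEmbedding_apply]
    constructor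
    · rintro ⟨i, hi, rfl⟩; exact hi
    · intro ha
      have : a < n := Finset.mem_range.mp (hs.1 ha)
      exact ⟨⟨a, this⟩, ha, rfl⟩
  · intro s hs
    simp only [Finset.card_map]

noncomputable def Cc (n : ℕ) (t : ℝ) : ℝ := ∑ s ∈ okC n, t ^ s.card

lemma mod_helper (n a b : ℕ) (hn : 2 ≤ n) (ha : a < n) (hb : b < n) :
    ((n - a + b) % n = 1 ↔ (a + 1) % n = b) := by
  have h1 : (n - a + b) % n = if a ≤ b then b - a else n - a + b := by
    split
    · next h =>
      rw [show n - a + b = n + (b - a) by omega, Nat.add_mod_left]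
      exact Nat.mod_eq_of_lt (by omega)
    · next h => exact Nat.mod_eq_of_lt (by omega)
  have h2 : (a + 1) % n = if a + 1 < n then a + 1 else 0 := by
    split
    · exact Nat.mod_eq_of_lt ‹_›
    · rw [show a + 1 = n by omega, Nat.mod_self]
  rw [h1, h2]
  split <;> split <;> omega

lemma fin_sub_val (n : ℕ) (i j : Fin n) : ((j - i : Fin n) : ℕ) = (n - i.val + j.val) % n := by
  rw [Fin.sub_def]

lemma sub_one_iff (n : ℕ) (hn : 2 ≤ n) (i j : Fin n) :
    ((j - i : Fin n) : ℕ) = 1 ↔ ((i : ℕ) + 1) % n = (j : ℕ) := by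
  rw [fin_sub_val]
  exact mod_helper n i.val j.val hn i.isLt j.isLt

open scoped Classical in
lemma cycle_transfer (n : ℕ) (hn : 3 ≤ n) (t : ℝ) :
    fgen ((cycleGraph n)ᶜ) t = Cc n t := by
  have hn2 : 2 ≤ n := by omega
  rw [fgen_eq, Cc]
  refine Finset.sum_nbij' (fun s => s.map Fin.valEmbedding)
    (fun s => Finset.univ.filter (fun i : Fin n => (i : ℕ) ∈ s)) ?_ ?_ ?_ ?_ ?_
  · intro s hs
    simp only [mem_filter, mem_univ, true_and] at hs
    simp only [okC, mem_filter, mem_powerset]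
    constructor
    · intro a ha
      simp only [Finset.mem_map, Fin.valEmbedding_apply] at ha
      obtain ⟨i, _, rfl⟩ := ha
      exact Finset.mem_range.mpr i.isLt
    · intro a ha hb
      simp only [Finset.mem_map, Fin.valEmbedding_apply] at ha hb
      obtain ⟨i, hi, rfl⟩ := ha
      obtain ⟨j, hj, hij⟩ := hb
      have hne : i ≠ j := by
        intro h
        subst h
        have h2 : ((i : ℕ) + 1) % n = if (i:ℕ) + 1 < n then (i:ℕ) + 1 else 0 := by
          split
          · exact Nat.mod_eq_of_lt ‹_›
          · rw [show (i:ℕ) + 1 = n by omega, Nat.mod_self]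
        have := i.isLt
        split at h2 <;> omega
      have hclq := hs hi hj hne
      simp only [SimpleGraph.compl_adj, cycleGraph] at hclq
      have : ((j - i : Fin n) : ℕ) = 1 := (sub_one_iff n hn2 i j).mpr hij.symm
      exact hclq.2 ⟨hne, Or.inr this⟩
  · intro s hs
    simp only [okC, mem_filter, mem_powerset] at hs
    simp only [mem_filter, mem_univ, true_and]
    intro i hi j hj hne
    simp only [Finset.mem_coe, mem_filter, mem_univ, true_and] at hi hj
    refine ⟨hne, ?_⟩
    simp only [cycleGraph]
    rintro ⟨-, (h | h)⟩
    · exact hs.2 j hj ((sub_one_iff n hn2 j i).mp h ▸ hi)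
    · exact hs.2 i hi ((sub_one_iff n hn2 i j).mp h ▸ hj)
  · intro s hs
    ext i
    simp [Fin.val_injective.eq_iff]
  · intro s hs
    simp only [okC, mem_filter, mem_powerset] at hs
    ext a
    simp only [Finset.mem_map, mem_filter, mem_univ, true_and, Fin.valEmbedding_apply]
    constructor
    · rintro ⟨i, hi, rfl⟩; exact hi
    · intro ha
      have : a < n := Finset.mem_range.mp (hs.1 ha)
      exact ⟨⟨a, this⟩, ha, rfl⟩
  · intro s hs
    simp only [Finset.card_map]

lemma cycle_dec (m : ℕ) (t : ℝ) : Cc (m + 3) t = Pp (m + 2) t + t * Pp m t := by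
  rw [Cc, ← Finset.sum_filter_add_sum_filter_not (okC (m+3)) (fun s => (m+2) ∈ s)]
  have h1 : (okC (m+3)).filter (fun s => ¬ (m+2) ∈ s) = okN (m+2) := by
    ext s
    simp only [okC, okN, mem_filter, mem_powerset]
    constructor
    · rintro ⟨⟨hs, hc⟩, hn⟩
      have hsub : s ⊆ Finset.range (m+2) := by
        intro a ha
        have h3 := hs ha
        simp only [mem_range] at h3 ⊢
        by_contra h
        have : a = m + 2 := by omega
        exact hn (this ▸ ha)
      refine ⟨hsub, fun a ha hb => ?_⟩
      have ha2 : a < m + 2 := by simpa using hsub ha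
      have hmod : (a + 1) % (m + 3) = a + 1 := Nat.mod_eq_of_lt (by omega)
      exact hc a ha (by rwa [hmod])
    · rintro ⟨hs, hc⟩
      have hsub : s ⊆ Finset.range (m+3) := hs.trans (Finset.range_subset_range.mpr (by omega))
      refine ⟨⟨hsub, fun a ha hb => ?_⟩, fun h => by simpa using hs h⟩
      have ha2 : a < m + 2 := by simpa using hs ha
      rw [Nat.mod_eq_of_lt (by omega)] at hb
      exact hc a ha hb
  have h2 : ∑ s ∈ (okC (m+3)).filter (fun s => (m+2) ∈ s), t ^ s.card = t * Pp m t := by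
    rw [Pp, Finset.mul_sum]
    have key : ∀ s ∈ (okC (m+3)).filter (fun s => (m+2) ∈ s),
        (0 : ℕ) ∉ s ∧ (m+1) ∉ s ∧ ∀ a ∈ s.erase (m+2), 1 ≤ a ∧ a ≤ m := by
      intro s hs
      simp only [okC, mem_filter, mem_powerset] at hs
      obtain ⟨⟨hsub, hcond⟩, hmem⟩ := hs
      have h0 : (0 : ℕ) ∉ s := by
        have := hcond (m+2) hmem
        rwa [Nat.mod_self] at this
      have hm1 : (m+1) ∉ s := by
        intro h
        have := hcond (m+1) h
        rw [Nat.mod_eq_of_lt (by omega)] at this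
        exact this hmem
      refine ⟨h0, hm1, fun a ha => ?_⟩
      have ha1 := Finset.mem_of_mem_erase ha
      have ha2 := Finset.ne_of_mem_erase ha
      have ha3 := hsub ha1
      simp only [mem_range] at ha3
      constructor
      · rcases Nat.eq_zero_or_pos a with rfl | h
        · exact absurd ha1 h0
        · exact h
      · by_contra h
        have : a = m + 1 := by omega
        exact hm1 (this ▸ ha1)
    refine Finset.sum_nbij' (t := okN m) (g := fun s => t * t ^ s.card)
      (fun s => (s.erase (m+2)).image (· - 1))
      (fun s => insert (m+2) (s.image (· + 1))) ?_ ?_ ?_ ?_ ?_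
    all_goals intro s hs
    · obtain ⟨h0, hm1, hbound⟩ := key s hs
      simp only [okC, mem_filter, mem_powerset] at hs
      obtain ⟨⟨hsub, hcond⟩, hmem⟩ := hs
      simp only [okN, mem_filter, mem_powerset]
      constructor
      · intro a ha
        simp only [Finset.mem_image] at ha
        obtain ⟨b, hb, rfl⟩ := ha
        have := hbound b hb
        simp only [mem_range]
        omega
      · intro a ha hb
        simp only [Finset.mem_image] at ha hb
        obtain ⟨b, hb', rfl⟩ := ha
        obtain ⟨c, hc', hcb⟩ := hb
        have hbb := hbound b hb'
        have hcc := hbound c hc'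
        have hcb1 : c = b + 1 := by omega
        subst hcb1
        have := hcond b (Finset.mem_of_mem_erase hb')
        rw [Nat.mod_eq_of_lt (by omega)] at this
        exact this (Finset.mem_of_mem_erase hc')
    · -- insert maps okN m into the filter set
      simp only [okN, mem_filter, mem_powerset] at hs
      obtain ⟨hsub, hcond⟩ := hs
      have hball : ∀ a ∈ s, a < m := by
        intro a ha; simpa using hsub ha
      simp only [okC, mem_filter, mem_powerset]
      refine ⟨⟨?_, ?_⟩, Finset.mem_insert_self _ _⟩
      · intro a ha
        rcases Finset.mem_insert.mp ha with rfl | h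
        · simp
        · simp only [Finset.mem_image] at h
          obtain ⟨b, hb, rfl⟩ := h
          have := hball b hb
          simp only [mem_range]; omega
      · intro a ha hb
        rcases Finset.mem_insert.mp ha with rfl | h
        · rw [Nat.mod_self] at hb
          rcases Finset.mem_insert.mp hb with h' | h'
          · omega
          · simp only [Finset.mem_image] at h'
            obtain ⟨b, _, hb'⟩ := h'
            omega
        · simp only [Finset.mem_image] at h
          obtain ⟨b, hb2, rfl⟩ := h
          have hbm := hball b hb2
          rw [Nat.mod_eq_of_lt (by omega)] at hb
          rcases Finset.mem_insert.mp hb with h' | h'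
          · omega
          · simp only [Finset.mem_image] at h'
            obtain ⟨c, hc2, hc3⟩ := h'
            have : c = b + 1 := by omega
            exact hcond b hb2 (this ▸ hc2)
    · -- left inverse
      obtain ⟨h0, hm1, hbound⟩ := key s hs
      simp only [mem_filter] at hs
      have him : ((s.erase (m+2)).image (· - 1)).image (· + 1) = s.erase (m+2) := by
        ext a
        simp only [Finset.mem_image]
        constructor
        · rintro ⟨b, ⟨c, hc, rfl⟩, rfl⟩
          have := hbound c hc
          rwa [show c - 1 + 1 = c by omega]
        · intro ha
          have := hbound a ha
          exact ⟨a - 1, ⟨a, ha, rfl⟩, by omega⟩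
      rw [him, Finset.insert_erase hs.2]
    · -- right inverse
      simp only [okN, mem_filter, mem_powerset] at hs
      obtain ⟨hsub, hcond⟩ := hs
      have hball : ∀ a ∈ s, a < m := by
        intro a ha; simpa using hsub ha
      have hnm : (m+2) ∉ s.image (· + 1) := by
        simp only [Finset.mem_image]
        rintro ⟨b, hb, hb'⟩
        have := hball b hb
        omega
      rw [Finset.erase_insert hnm]
      ext a
      simp only [Finset.mem_image]
      constructor
      · rintro ⟨b, ⟨c, hc, rfl⟩, rfl⟩
        simpa using hc
      · intro ha
        exact ⟨a + 1, ⟨a, ha, rfl⟩, by omega⟩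
    · -- cardinality / summand equality
      obtain ⟨h0, hm1, hbound⟩ := key s hs
      simp only [mem_filter] at hs
      have hinj : Set.InjOn (· - 1) (s.erase (m+2)) := by
        intro a ha b hb hab
        have h1 := hbound a ha
        have h2 := hbound b hb
        simp only at hab
        omega
      rw [Finset.card_image_of_injOn hinj, Finset.card_erase_of_mem hs.2, ← pow_succ']
      have : 1 ≤ s.card := Finset.card_pos.mpr ⟨m+2, hs.2⟩
      congr 1
      omega
  rw [h1, h2, show (∑ s ∈ okN (m+2), t ^ s.card) = Pp (m+2) t from rfl]
  ring

lemma Pp_closed (t u : ℝ) (hu2 : u ^ 2 = 4 * t + 1) (hu : u ≠ 0) (n : ℕ) :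
    Pp n t = ((1 + u) ^ (n + 2) - (1 - u) ^ (n + 2)) / (2 ^ (n + 2) * u) := by
  have h2 : (2 : ℝ) ≠ 0 := two_ne_zero
  induction n using Nat.twoStepInduction with
  | zero =>
    rw [Pp_zero]
    rw [eq_div_iff (by simp [hu])]
    ring
  | one =>
    rw [Pp_one]
    rw [eq_div_iff (by simp [hu])]
    linear_combination (-2 * u) * hu2
  | more n ih1 ih2 =>
    rw [Pp_rec, ih1, ih2]
    have hA : (1 + u) ^ (n + 2 + 2) = 2 * (1 + u) ^ (n + 2 + 1) + 4 * t * (1 + u) ^ (n + 2) := by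
      have hq : (1 + u) ^ 2 = 2 * (1 + u) + 4 * t := by linear_combination hu2
      calc (1 + u) ^ (n + 2 + 2) = (1 + u) ^ (n + 2) * (1 + u) ^ 2 := by rw [← pow_add]
        _ = (1 + u) ^ (n + 2) * (2 * (1 + u) + 4 * t) := by rw [hq]
        _ = 2 * ((1 + u) ^ (n + 2) * (1 + u)) + 4 * t * (1 + u) ^ (n + 2) := by ring
        _ = 2 * (1 + u) ^ (n + 2 + 1) + 4 * t * (1 + u) ^ (n + 2) := by rw [← pow_succ]
    have hB : (1 - u) ^ (n + 2 + 2) = 2 * (1 - u) ^ (n + 2 + 1) + 4 * t * (1 - u) ^ (n + 2) := by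
      have hq : (1 - u) ^ 2 = 2 * (1 - u) + 4 * t := by linear_combination hu2
      calc (1 - u) ^ (n + 2 + 2) = (1 - u) ^ (n + 2) * (1 - u) ^ 2 := by rw [← pow_add]
        _ = (1 - u) ^ (n + 2) * (2 * (1 - u) + 4 * t) := by rw [hq]
        _ = 2 * ((1 - u) ^ (n + 2) * (1 - u)) + 4 * t * (1 - u) ^ (n + 2) := by ring
        _ = 2 * (1 - u) ^ (n + 2 + 1) + 4 * t * (1 - u) ^ (n + 2) := by rw [← pow_succ]
    rw [show n + 1 + 2 = n + 2 + 1 from by omega] at *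
    rw [hA, hB, pow_succ, pow_succ, show n + 2 + 2 = n + 2 + 1 + 1 from by omega, pow_succ,
      pow_succ]
    have hD : (2 : ℝ) ^ (n + 2) ≠ 0 := by positivity
    field_simp
    ring

/-- Binet-type closed forms for the simplex generating polynomials of `G_n = (C_n)ᶜ`
and `G_n^+ = (P_n)ᶜ`, with `u = √(4t+1)` and `t > -1/4`. -/
theorem binet_closed_forms (t : ℝ) (ht : -1 / 4 < t) :
    (∀ n : ℕ, 3 ≤ n →
      fgen ((cycleGraph n)ᶜ) t =
        ((1 + Real.sqrt (4 * t + 1)) ^ n + (1 - Real.sqrt (4 * t + 1)) ^ n) / 2 ^ n) ∧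
    (∀ n : ℕ, 1 ≤ n →
      fgen ((pathGraph' n)ᶜ) t =
        ((1 + Real.sqrt (4 * t + 1)) ^ (n + 2) - (1 - Real.sqrt (4 * t + 1)) ^ (n + 2)) /
          (2 ^ (n + 2) * Real.sqrt (4 * t + 1))) := by
  set u := Real.sqrt (4 * t + 1) with hudef
  have hpos : (0 : ℝ) < 4 * t + 1 := by linarith
  have hu2 : u ^ 2 = 4 * t + 1 := Real.sq_sqrt hpos.le
  have hu : u ≠ 0 := by
    rw [hudef]
    exact (Real.sqrt_pos.mpr hpos).ne'
  constructor
  · intro n hn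
    obtain ⟨m, rfl⟩ : ∃ m, n = m + 3 := ⟨n - 3, by omega⟩
    rw [cycle_transfer _ (by omega) t, cycle_dec, Pp_closed t u hu2 hu, Pp_closed t u hu2 hu]
    have hA : (1 + u) ^ (m + 2 + 2) = 2 * u * (1 + u) ^ (m + 2 + 1) - 4 * t * (1 + u) ^ (m + 2) := by
      have hq : (1 + u) ^ 2 = 2 * u * (1 + u) - 4 * t := by linear_combination -hu2
      calc (1 + u) ^ (m + 2 + 2) = (1 + u) ^ (m + 2) * (1 + u) ^ 2 := by rw [← pow_add]
        _ = (1 + u) ^ (m + 2) * (2 * u * (1 + u) - 4 * t) := by rw [hq]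
        _ = 2 * u * ((1 + u) ^ (m + 2) * (1 + u)) - 4 * t * (1 + u) ^ (m + 2) := by ring
        _ = 2 * u * (1 + u) ^ (m + 2 + 1) - 4 * t * (1 + u) ^ (m + 2) := by rw [← pow_succ]
    have hB : (1 - u) ^ (m + 2 + 2) = -(2 * u) * (1 - u) ^ (m + 2 + 1) - 4 * t * (1 - u) ^ (m + 2) := by
      have hq : (1 - u) ^ 2 = -(2 * u) * (1 - u) - 4 * t := by linear_combination -hu2
      calc (1 - u) ^ (m + 2 + 2) = (1 - u) ^ (m + 2) * (1 - u) ^ 2 := by rw [← pow_add]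
        _ = (1 - u) ^ (m + 2) * (-(2 * u) * (1 - u) - 4 * t) := by rw [hq]
        _ = -(2 * u) * ((1 - u) ^ (m + 2) * (1 - u)) - 4 * t * (1 - u) ^ (m + 2) := by ring
        _ = -(2 * u) * (1 - u) ^ (m + 2 + 1) - 4 * t * (1 - u) ^ (m + 2) := by rw [← pow_succ]
    rw [show m + 3 = m + 2 + 1 from by omega, hA, hB]
    have d1 : ((2 : ℝ)) ^ (m + 2 + 2) = 2 ^ (m + 2) * 4 := by rw [pow_add]; norm_num
    have d2 : ((2 : ℝ)) ^ (m + 2 + 1) = 2 ^ (m + 2) * 2 := by rw [pow_add]; norm_num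
    rw [d1, d2]
    have hD : (2 : ℝ) ^ (m + 2) ≠ 0 := by positivity
    field_simp
    ring
  · intro n hn
    rw [path_transfer, Pp_closed t u hu2 hu]
end

section
/- For every n ≥ 4 and every vertex v of G_n = (C_n)ᶜ, the unit sphere S(v), i.e., the subgraph of G_n induced on the neighbor set of v, is isomorphic (as a simple graph) to G_{n-3}^+ = (P_{n-3})ᶜ, the complement of the path graph on n-3 vertices. -/
section helpers
variable {n : ℕ}

lemma fin_sub_add_sub [NeZero n] {a b : Fin n} (h : a ≠ b) :
    (a - b).val + (b - a).val = n := by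
  have h0 : a - b + (b - a) = 0 := by rw [sub_add_sub_cancel, sub_self]
  have hv : ((a - b) + (b - a)).val = ((a - b).val + (b - a).val) % n := Fin.val_add _ _
  rw [h0] at hv
  have hne : (a - b).val ≠ 0 := by
    intro hc
    exact h (sub_eq_zero.mp (Fin.ext hc))
  have h1 : (a - b).val < n := (a - b).isLt
  have h2 : (b - a).val < n := (b - a).isLt
  rcases Nat.lt_or_ge ((a - b).val + (b - a).val) n with hlt | hge
  · rw [Nat.mod_eq_of_lt hlt] at hv
    simp at hv; omega
  · have heq : ((a - b).val + (b - a).val) % n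
        = ((a - b).val + (b - a).val - n) % n := Nat.mod_eq_sub_mod hge
    rw [heq, Nat.mod_eq_of_lt (by omega)] at hv
    simp at hv; omega

lemma fin_val_sub_eq_one_iff [NeZero n] {x y : Fin n} (hy : y.val + 1 < n) :
    (x - y).val = 1 ↔ x.val = y.val + 1 := by
  have hone : (1 : Fin n).val = 1 := by
    rw [Fin.val_one']; exact Nat.mod_eq_of_lt (by omega)
  constructor
  · intro h
    have hxy : x - y = 1 := Fin.ext (by rw [h, hone])
    have hx : x = y + 1 := by rw [← sub_add_cancel x y, hxy, add_comm]
    rw [hx, Fin.val_add, hone, Nat.mod_eq_of_lt hy]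
  · intro h
    have hx : x = y + 1 := Fin.ext (by rw [Fin.val_add, hone, Nat.mod_eq_of_lt hy, h])
    rw [hx, add_sub_cancel_left, hone]

end helpers

/-- Every unit sphere of `G_n = (C_n)ᶜ` is isomorphic to `G_{n-3}^+ = (P_{n-3})ᶜ`. -/
theorem unitSphere_iso_pathComplement (n : ℕ) (hn : 4 ≤ n) (v : Fin n) :
    Nonempty
      (SimpleGraph.Iso
        (((cycleGraph n)ᶜ).induce (((cycleGraph n)ᶜ).neighborSet v))
        ((pathGraph' (n - 3))ᶜ)) := by
  haveI : NeZero n := ⟨by omega⟩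
  have hmem : ∀ u : Fin n, u ∈ ((cycleGraph n)ᶜ).neighborSet v ↔
      2 ≤ (u - v).val ∧ (u - v).val ≤ n - 2 := by
    intro u
    have hlt := (u - v).isLt
    simp only [SimpleGraph.mem_neighborSet, SimpleGraph.compl_adj, cycleGraph, ne_eq,
      not_and, not_or]
    constructor
    · rintro ⟨hne, hadj⟩
      have h1 := hadj hne
      have hsum : (u - v).val + (v - u).val = n := fin_sub_add_sub (fun h => hne h.symm)
      have h0 : (u - v).val ≠ 0 := by
        intro hc
        exact hne ((sub_eq_zero.mp (Fin.ext hc)).symm)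
      omega
    · rintro ⟨h2, h2'⟩
      have hne : v ≠ u := by
        intro h; subst h; simp at h2
      refine ⟨hne, fun _ => ⟨?_, ?_⟩⟩
      · have hsum : (u - v).val + (v - u).val = n := fin_sub_add_sub (fun h => hne h.symm)
        omega
      · omega
  let e : Fin (n - 3) ≃ ↥(((cycleGraph n)ᶜ).neighborSet v) :=
    { toFun := fun k => ⟨v + ⟨k.val + 2, by omega⟩, by
        rw [hmem, add_sub_cancel_left]
        have := k.isLt
        simp only []
        omega⟩
      invFun := fun u => ⟨((u : Fin n) - v).val - 2, by
        have := (hmem u).mp u.2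
        omega⟩
      left_inv := by
        intro k
        ext
        simp only [add_sub_cancel_left]
        omega
      right_inv := by
        intro u
        have hu := (hmem u).mp u.2
        ext
        have h1 : (⟨((u : Fin n) - v).val - 2 + 2, by omega⟩ : Fin n) = (u : Fin n) - v :=
          Fin.ext (by simp; omega)
        simp only [h1, add_sub_cancel] }
  refine ⟨SimpleGraph.Iso.symm { toEquiv := e, map_rel_iff' := ?_ }⟩
  intro a b
  have ha := a.isLt
  have hb := b.isLt
  show ((cycleGraph n)ᶜ).Adj (v + ⟨a.val + 2, by omega⟩) (v + ⟨b.val + 2, by omega⟩) ↔ _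
  simp only [SimpleGraph.compl_adj, cycleGraph, pathGraph', ne_eq, add_right_inj,
    add_sub_add_left_eq_sub, not_and, not_or]
  rw [fin_val_sub_eq_one_iff (by simp; omega), fin_val_sub_eq_one_iff (by simp; omega)]
  rw [Fin.ext_iff, Fin.ext_iff]
  simp only []
  omega
end

section
/- Let n ≥ 5 and let x, y be two vertices of G_n = (C_n)ᶜ that are NOT adjacent in G_n (equivalently, x ≠ y are adjacent in the cycle C_n). Then the subgraph of G_n induced on the intersection N(x) ∩ N(y) of the two neighbor sets (the intersection of the two unit spheres) is isomorphic to G_{n-4}^+ = (P_{n-4})ᶜ, the complement of the path graph on n-4 vertices. -/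
set_option maxHeartbeats 1000000

lemma subval {n : ℕ} (a b : Fin n) :
    (a - b).val = if b.val ≤ a.val then a.val - b.val else n + a.val - b.val := by
  have ha := a.isLt
  have hb := b.isLt
  rw [Fin.sub_def]
  simp only
  split_ifs with h
  · rw [show n - b.val + a.val = (a.val - b.val) + n by omega, Nat.add_mod_right,
      Nat.mod_eq_of_lt (by omega)]
  · rw [Nat.mod_eq_of_lt (by omega)]
    omega

lemma modval {n m : ℕ} (h : m < 2 * n) : m % n = if m < n then m else m - n := by
  split_ifs with h'
  · exact Nat.mod_eq_of_lt h'
  · rw [show m = (m - n) + n by omega, Nat.add_mod_right, Nat.mod_eq_of_lt (by omega)]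
    omega


lemma cyc_compl_adj {n : ℕ} (a b : Fin n) :
    ((cycleGraph n)ᶜ).Adj a b ↔ a.val ≠ b.val ∧ (a - b).val ≠ 1 ∧ (b - a).val ≠ 1 := by
  simp only [SimpleGraph.compl_adj, cycleGraph, ne_eq, Fin.ext_iff, not_and, not_or]
  constructor
  · rintro ⟨h1, h2⟩
    exact ⟨h1, by tauto⟩
  · rintro ⟨h1, h2, h3⟩
    exact ⟨h1, fun _ => ⟨h2, h3⟩⟩

lemma helper (n : ℕ) (hn : 5 ≤ n) (x y : Fin n) (hy : (y - x).val = 1) :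
    Nonempty
      (SimpleGraph.Iso
        (((cycleGraph n)ᶜ).induce
          (((cycleGraph n)ᶜ).neighborSet x ∩ ((cycleGraph n)ᶜ).neighborSet y))
        ((pathGraph' (n - 4))ᶜ)) := by
  have hx := x.isLt
  have hyl := y.isLt
  rw [subval] at hy
  have hy' : y.val = x.val + 1 ∨ (x.val = n - 1 ∧ y.val = 0) := by
    split_ifs at hy <;> omega
  clear hy
  set S : Set (Fin n) :=
    ((cycleGraph n)ᶜ).neighborSet x ∩ ((cycleGraph n)ᶜ).neighborSet y with hS
  have hmemS : ∀ z : Fin n, z ∈ S ↔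
      (x.val ≠ z.val ∧ (x - z).val ≠ 1 ∧ (z - x).val ≠ 1) ∧
      (y.val ≠ z.val ∧ (y - z).val ≠ 1 ∧ (z - y).val ≠ 1) := by
    intro z
    simp only [hS, Set.mem_inter_iff, SimpleGraph.mem_neighborSet, cyc_compl_adj]
  set f : Fin (n - 4) → Fin n :=
    fun i => ⟨(x.val + i.val + 3) % n, Nat.mod_lt _ (by omega)⟩ with hf
  have hfval : ∀ i : Fin (n - 4), (f i).val =
      if x.val + i.val + 3 < n then x.val + i.val + 3 else x.val + i.val + 3 - n := by
    intro i
    have hi := i.isLt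
    show (x.val + i.val + 3) % n = _
    exact modval (by omega)
  have hmem : ∀ i : Fin (n - 4), f i ∈ S := by
    intro i
    have hi := i.isLt
    have h1 := hfval i
    rw [hmemS]
    rw [subval, subval, subval, subval, h1]
    split_ifs <;> omega
  set f' : Fin (n - 4) → S := fun i => ⟨f i, hmem i⟩ with hf'
  have hinj : Function.Injective f' := by
    intro i j hij
    have hi := i.isLt
    have hj := j.isLt
    have hv : (f i).val = (f j).val :=
      congrArg (fun z : S => (z : Fin n).val) hij
    rw [hfval i, hfval j] at hv
    apply Fin.ext
    split_ifs at hv <;> omega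
  have hsurj : Function.Surjective f' := by
    rintro ⟨z, hz⟩
    rw [hmemS] at hz
    have hzl := z.isLt
    rw [subval, subval, subval, subval] at hz
    have hd := subval z x
    refine ⟨⟨(z - x).val - 3, ?_⟩, ?_⟩
    · split_ifs at hz hd <;> omega
    · apply Subtype.ext
      apply Fin.ext
      have hdlt := (z - x).isLt
      show (x.val + ((z - x).val - 3) + 3) % n = z.val
      rw [modval (by omega)]
      split_ifs at hz hd ⊢ <;> omega
  refine ⟨(SimpleGraph.Iso.symm ⟨Equiv.ofBijective f' ⟨hinj, hsurj⟩, ?_⟩)⟩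
  intro i j
  have hi := i.isLt
  have hj := j.isLt
  have h1 := hfval i
  have h2 := hfval j
  have hs1 := subval (f i) (f j)
  have hs2 := subval (f j) (f i)
  show (((cycleGraph n)ᶜ).induce S).Adj (f' i) (f' j) ↔ _
  have hind : (((cycleGraph n)ᶜ).induce S).Adj (f' i) (f' j) ↔
      ((cycleGraph n)ᶜ).Adj (f i) (f j) := Iff.rfl
  have hrhs : ((pathGraph' (n - 4))ᶜ).Adj i j ↔
      (i.val ≠ j.val ∧ ¬(i.val + 1 = j.val) ∧ ¬(j.val + 1 = i.val)) := by
    simp only [SimpleGraph.compl_adj, pathGraph', ne_eq, Fin.ext_iff, not_or]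
  rw [hind, cyc_compl_adj, hrhs, hs1, hs2, h1, h2]
  split_ifs <;> omega

/-- The intersection of two non-adjacent unit spheres in `G_n = (C_n)ᶜ` is isomorphic to
`G_{n-4}^+ = (P_{n-4})ᶜ`. -/
theorem sphere_intersection_iso (n : ℕ) (hn : 5 ≤ n) (x y : Fin n) (hxy : x ≠ y)
    (hadj : ¬ ((cycleGraph n)ᶜ).Adj x y) :
    Nonempty
      (SimpleGraph.Iso
        (((cycleGraph n)ᶜ).induce
          (((cycleGraph n)ᶜ).neighborSet x ∩ ((cycleGraph n)ᶜ).neighborSet y))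
        ((pathGraph' (n - 4))ᶜ)) := by
  
  rw [SimpleGraph.compl_adj, not_and, not_not] at hadj
  rcases (hadj hxy).2 with h | h
  · rw [Set.inter_comm]
    exact helper n hn y x h
  · exact helper n hn x y h
end

section
/- Let n ≥ 4 and let W be a proper subset of the vertex set Fin n of G_n = (C_n)ᶜ. Then the Euler characteristic of the clique complex of the subgraph of G_n induced on W lies in {0, 1, 2}. (This reflects the theorem that every strict induced subgraph of G_n is either contractible or homotopy equivalent to a sphere.) -/
/-! ### Auxiliary combinatorics: signed count of "spread" subsets of a finset of naturals -/

/-- Signed indicator of an independent (no two consecutive) subset. -/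
def gg (s : Finset ℕ) : ℤ := if ∀ x ∈ s, x + 1 ∉ s then (-1 : ℤ) ^ s.card else 0

/-- Signed count of independent subsets. -/
def SS (A : Finset ℕ) : ℤ := ∑ s ∈ A.powerset, gg s

def stSet : Finset (ℤ × ℤ) :=
  {(1,1), (0,1), (-1,0), (-1,-1), (0,-1), (1,0), (0,0)}

lemma st_cases {b c : ℤ} (h : (b, c) ∈ stSet) :
    (b = 1 ∧ c = 1) ∨ (b = 0 ∧ c = 1) ∨ (b = -1 ∧ c = 0) ∨ (b = -1 ∧ c = -1) ∨
    (b = 0 ∧ c = -1) ∨ (b = 1 ∧ c = 0) ∨ (b = 0 ∧ c = 0) := by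
  simp only [stSet, Finset.mem_insert, Finset.mem_singleton, Prod.mk.injEq] at h
  tauto

lemma st1 {b c : ℤ} (h : (b, c) ∈ stSet) : (b, b) ∈ stSet := by
  rcases st_cases h with ⟨h1, h2⟩ | ⟨h1, h2⟩ | ⟨h1, h2⟩ | ⟨h1, h2⟩ | ⟨h1, h2⟩ | ⟨h1, h2⟩ | ⟨h1, h2⟩ <;>
    subst h1 <;> subst h2 <;> decide

lemma st2 {b c : ℤ} (h : (b, c) ∈ stSet) : (b - c, b) ∈ stSet := by
  rcases st_cases h with ⟨h1, h2⟩ | ⟨h1, h2⟩ | ⟨h1, h2⟩ | ⟨h1, h2⟩ | ⟨h1, h2⟩ | ⟨h1, h2⟩ | ⟨h1, h2⟩ <;>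
    subst h1 <;> subst h2 <;> decide

lemma indep_insert (t : Finset ℕ) (k : ℕ) (hk : ∀ x ∈ t, x < k) :
    (∀ x ∈ insert k t, x + 1 ∉ insert k t) ↔ ((∀ x ∈ t, x + 1 ∉ t) ∧ (k - 1) ∉ t) := by
  constructor
  · intro h
    refine ⟨fun x hx hx1 => h x (Finset.mem_insert_of_mem hx) (Finset.mem_insert_of_mem hx1), ?_⟩
    intro hmem
    have hk1 : k - 1 < k := hk _ hmem
    have heq : k - 1 + 1 = k := by omega
    exact h (k - 1) (Finset.mem_insert_of_mem hmem) (heq ▸ Finset.mem_insert_self k t)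
  · rintro ⟨h1, h2⟩ x hx hx1
    rcases Finset.mem_insert.mp hx with rfl | hx
    · rcases Finset.mem_insert.mp hx1 with h | h
      · omega
      · have := hk _ h; omega
    · rcases Finset.mem_insert.mp hx1 with h | h
      · have hxk := hk _ hx
        have : x = k - 1 := by omega
        exact h2 (this ▸ hx)
      · exact h1 x hx h

lemma powerset_filter_not_mem (B : Finset ℕ) (a : ℕ) :
    B.powerset.filter (fun t => a ∉ t) = (B.erase a).powerset := by
  ext t
  simp only [Finset.mem_filter, Finset.mem_powerset, Finset.subset_erase]

lemma SS_insert (B : Finset ℕ) (k : ℕ) (hk : ∀ x ∈ B, x < k) :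
    SS (insert k B) = SS B - SS (B.erase (k - 1)) := by
  have hkB : k ∉ B := fun h => lt_irrefl k (hk k h)
  rw [SS, Finset.sum_powerset_insert hkB]
  have h1 : ∀ t ∈ B.powerset, gg (insert k t) = if (k - 1) ∉ t then -gg t else 0 := by
    intro t ht
    rw [Finset.mem_powerset] at ht
    have hkt : k ∉ t := fun h => lt_irrefl k (hk k (ht h))
    have hlt : ∀ x ∈ t, x < k := fun x hx => hk x (ht hx)
    have hiff := indep_insert t k hlt
    rw [gg, Finset.card_insert_of_notMem hkt]
    by_cases hmem : (k - 1) ∈ t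
    · rw [if_neg (fun hcon => (hiff.mp hcon).2 hmem), if_neg (fun hc => hc hmem)]
    · by_cases hind : ∀ x ∈ t, x + 1 ∉ t
      · rw [if_pos (hiff.mpr ⟨hind, hmem⟩), if_pos hmem, gg, if_pos hind, pow_succ]
        ring
      · rw [if_neg (fun hcon => hind (hiff.mp hcon).1), if_pos hmem, gg, if_neg hind, neg_zero]
  rw [Finset.sum_congr rfl h1, ← Finset.sum_filter, powerset_filter_not_mem]
  rw [Finset.sum_neg_distrib]
  rw [SS, SS]
  ring

lemma SS_empty : SS ∅ = 1 := by
  simp [SS, gg]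

lemma key (A : Finset ℕ) (k : ℕ) :
    (SS (A.filter (· < k)), SS ((A.filter (· < k)).erase (k - 1))) ∈ stSet := by
  induction k with
  | zero =>
    have h0 : A.filter (· < 0) = ∅ := by
      apply Finset.filter_false_of_mem; intro x _; omega
    rw [h0]
    simp only [Finset.erase_empty, SS_empty]
    decide
  | succ k ih =>
    set B := A.filter (· < k) with hB
    have hBk : ∀ x ∈ B, x < k := by
      intro x hx; exact (Finset.mem_filter.mp hx).2
    have hkB : k ∉ B := fun h => lt_irrefl k (hBk k h)
    have hsucc : (k + 1 : ℕ) - 1 = k := by omega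
    by_cases hkA : k ∈ A
    · have hfe : A.filter (· < k + 1) = insert k B := by
        ext x
        simp only [hB, Finset.mem_filter, Finset.mem_insert]
        constructor
        · rintro ⟨hxA, hx⟩
          rcases Nat.lt_or_ge x k with h | h
          · exact Or.inr ⟨hxA, h⟩
          · left; omega
        · rintro (rfl | ⟨hxA, hx⟩)
          · exact ⟨hkA, by omega⟩
          · exact ⟨hxA, by omega⟩
      rw [hfe, hsucc, Finset.erase_insert hkB, SS_insert B k hBk]
      exact st2 ih
    · have hfe : A.filter (· < k + 1) = B := by
        ext x
        simp only [hB, Finset.mem_filter]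
        constructor
        · rintro ⟨hxA, hx⟩
          refine ⟨hxA, ?_⟩
          rcases Nat.lt_or_ge x k with h | h
          · exact h
          · exfalso; have : x = k := by omega
            exact hkA (this ▸ hxA)
        · rintro ⟨hxA, hx⟩; exact ⟨hxA, by omega⟩
      rw [hfe, hsucc, Finset.erase_eq_of_notMem hkB]
      exact st1 ih

lemma SS_mem (A : Finset ℕ) : SS A = -1 ∨ SS A = 0 ∨ SS A = 1 := by
  have hk : ∀ x ∈ A, x < A.sup id + 1 := fun x hx =>
    Nat.lt_succ_of_le (Finset.le_sup (f := id) hx)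
  have hfe : A.filter (· < A.sup id + 1) = A := by
    apply Finset.filter_true_of_mem
    intro x hx; exact hk x hx
  have := key A (A.sup id + 1)
  rw [hfe] at this
  rcases st_cases this with ⟨h1, _⟩ | ⟨h1, _⟩ | ⟨h1, _⟩ | ⟨h1, _⟩ | ⟨h1, _⟩ | ⟨h1, _⟩ | ⟨h1, _⟩ <;>
    omega

/-! ### Relating the Euler characteristic to the signed clique count -/

/-- Signed count of all cliques (including the empty one). -/
noncomputable def Ncl {V : Type*} [Finite V] (G : SimpleGraph V) : ℤ := by
  classical
  letI : Fintype V := Fintype.ofFinite V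
  exact ∑ s ∈ Finset.univ.filter (fun s : Finset V => G.IsClique (s : Set V)), (-1 : ℤ) ^ s.card

lemma eulerChar_eq_one_sub_Ncl {V : Type*} [Finite V] (G : SimpleGraph V) :
    eulerChar G = 1 - Ncl G := by
  classical
  letI : Fintype V := Fintype.ofFinite V
  rw [eulerChar, Ncl, cliquesOf]
  have hins : (Finset.univ.filter (fun s : Finset V => G.IsClique (s : Set V))) =
      insert ∅ (Finset.univ.filter
        (fun s : Finset V => s.Nonempty ∧ G.IsClique (s : Set V))) := by
    ext s
    simp only [Finset.mem_filter, Finset.mem_insert, Finset.mem_univ, true_and]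
    by_cases hs : s = ∅
    · subst hs
      simp [SimpleGraph.isClique_empty]
    · simp [hs, Finset.nonempty_iff_ne_empty]
  rw [hins, Finset.sum_insert (by simp)]
  have : ∀ c ∈ Finset.univ.filter
      (fun s : Finset V => s.Nonempty ∧ G.IsClique (s : Set V)),
      (-1 : ℤ) ^ (c.card + 1) = -((-1 : ℤ) ^ c.card) := by
    intro c _; rw [pow_succ]; ring
  rw [Finset.sum_congr rfl this, Finset.sum_neg_distrib]
  simp only [Finset.card_empty, pow_zero]
  ring

/-! ### Main theorem -/

/-- Every strict induced subgraph of `G_n = (C_n)ᶜ` has Euler characteristic in `{0, 1, 2}`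
(it is either contractible or homotopy equivalent to a sphere). -/
theorem strict_induced_subgraph_eulerChar (n : ℕ) (hn : 4 ≤ n) (W : Set (Fin n))
    (hW : W ≠ Set.univ) :
    eulerChar (((cycleGraph n)ᶜ).induce W) ∈ ({0, 1, 2} : Set ℤ) := by
  classical
  haveI : NeZero n := ⟨by omega⟩
  obtain ⟨v, hv⟩ : ∃ v : Fin n, v ∉ W := by
    by_contra h
    push_neg at h
    exact hW (Set.eq_univ_iff_forall.mpr h)
  letI : Fintype W := Fintype.ofFinite W
  set G := ((cycleGraph n)ᶜ).induce W with hG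
  -- the embedding into ℕ
  set eN : W → ℕ := fun a => ((a : Fin n) - (v + 1)).val with heN
  have heInj : Function.Injective eN := by
    intro a b hab
    have h1 : (a : Fin n) - (v + 1) = (b : Fin n) - (v + 1) := Fin.val_injective hab
    have h2 : (a : Fin n) = (b : Fin n) := by
      have := congrArg (· + (v + 1)) h1
      simpa using this
    exact Subtype.coe_injective h2
  have hltn : ∀ a : W, eN a < n := fun a => ((a : Fin n) - (v + 1)).isLt
  -- value of Fin subtraction
  have fin_sub_val : ∀ x y : Fin n,
      (x - y).val = if y.val ≤ x.val then x.val - y.val else x.val + n - y.val := by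
    intro x y
    rw [Fin.sub_def]
    simp only
    rcases le_or_gt y.val x.val with h | h
    · rw [if_pos h]
      have hx := x.isLt
      have hy := y.isLt
      have heq : n - y.val + x.val = n + (x.val - y.val) := by omega
      rw [heq, Nat.add_mod_left, Nat.mod_eq_of_lt (by omega)]
    · rw [if_neg (by omega)]
      have hx := x.isLt
      have hy := y.isLt
      rw [Nat.mod_eq_of_lt (by omega)]
      omega
  have hv1 : ((v + 1 : Fin n)).val = (v.val + 1) % n := by
    rw [Fin.add_def, Fin.val_one']
    have h1 : 1 % n = 1 := Nat.mod_eq_of_lt (by omega)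
    rw [h1]
  have hvtop : ((v - (v + 1) : Fin n)).val = n - 1 := by
    rw [fin_sub_val, hv1]
    have hvlt := v.isLt
    rcases Nat.lt_or_ge v.val (n - 1) with h | h
    · rw [Nat.mod_eq_of_lt (by omega)]
      rw [if_neg (by omega)]
      omega
    · have : v.val = n - 1 := by omega
      rw [this]
      have h2 : (n - 1 + 1) % n = 0 := by
        have h3 : n - 1 + 1 = n := by omega
        rw [h3, Nat.mod_self]
      rw [h2, if_pos (by omega)]
      omega
  have hlt : ∀ a : W, eN a < n - 1 := by
    intro a
    have h1 := hltn a
    rcases Nat.lt_or_ge (eN a) (n - 1) with h | h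
    · exact h
    · exfalso
      have heq : eN a = n - 1 := by omega
      have h2 : (a : Fin n) - (v + 1) = v - (v + 1) := by
        apply Fin.val_injective
        rw [hvtop]
        exact heq
      have h3 : (a : Fin n) = v := by
        have := congrArg (· + (v + 1)) h2
        simpa using this
      exact hv (h3 ▸ a.2)
  -- adjacency characterization
  have hadj : ∀ a b : W, G.Adj a b ↔
      (eN a ≠ eN b ∧ ¬(eN a + 1 = eN b ∨ eN b + 1 = eN a)) := by
    intro a b
    have hdiff : (a : Fin n) - (b : Fin n) =
        ((a : Fin n) - (v + 1)) - ((b : Fin n) - (v + 1)) := by abel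
    have hdiff' : (b : Fin n) - (a : Fin n) =
        ((b : Fin n) - (v + 1)) - ((a : Fin n) - (v + 1)) := by abel
    have hab : ((a : Fin n) ≠ (b : Fin n)) ↔ eN a ≠ eN b := by
      constructor
      · intro h1 h2
        exact h1 (congrArg Subtype.val (heInj h2))
      · intro h1 h2
        exact h1 (congrArg eN (Subtype.ext h2))
    have h1 := hlt a
    have h2 := hlt b
    have hpa : ((a : Fin n) - (v + 1)).val = eN a := rfl
    have hpb : ((b : Fin n) - (v + 1)).val = eN b := rfl
    have hk1 : ((a : Fin n) - (b : Fin n)).val =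
        if eN b ≤ eN a then eN a - eN b else eN a + n - eN b := by
      rw [hdiff]
      exact fin_sub_val _ _
    have hk2 : ((b : Fin n) - (a : Fin n)).val =
        if eN a ≤ eN b then eN b - eN a else eN b + n - eN a := by
      rw [hdiff']
      exact fin_sub_val _ _
    have key1 : ((a : Fin n) - (b : Fin n)).val = 1 ↔ eN a = eN b + 1 := by
      rw [hk1]
      split_ifs with h <;> omega
    have key2 : ((b : Fin n) - (a : Fin n)).val = 1 ↔ eN b = eN a + 1 := by
      rw [hk2]
      split_ifs with h <;> omega
    show ((cycleGraph n)ᶜ).Adj (a : Fin n) (b : Fin n) ↔ _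
    rw [SimpleGraph.compl_adj]
    constructor
    · rintro ⟨hne', hnadj⟩
      refine ⟨hab.mp hne', ?_⟩
      rintro (h | h)
      · exact hnadj ⟨hne', Or.inr (key2.mpr (by omega))⟩
      · exact hnadj ⟨hne', Or.inl (key1.mpr (by omega))⟩
    · rintro ⟨hne', hncon⟩
      refine ⟨hab.mpr hne', ?_⟩
      rintro ⟨_, h | h⟩
      · have := key1.mp h
        exact hncon (Or.inr (by omega))
      · have := key2.mp h
        exact hncon (Or.inl (by omega))
  -- the image finset
  set A : Finset ℕ := Finset.univ.image eN with hA
  -- Ncl G = SS A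
  have hNcl : Ncl G = SS A := by
    rw [Ncl]
    rw [SS, ← Finset.sum_filter_add_sum_filter_not A.powerset (fun t => ∀ x ∈ t, x + 1 ∉ t)]
    have hzero : ∑ t ∈ A.powerset.filter (fun t => ¬∀ x ∈ t, x + 1 ∉ t), gg t = 0 := by
      apply Finset.sum_eq_zero
      intro t ht
      rw [Finset.mem_filter] at ht
      rw [gg, if_neg ht.2]
    rw [hzero, add_zero]
    have hval : ∀ t ∈ A.powerset.filter (fun t => ∀ x ∈ t, x + 1 ∉ t),
        gg t = (-1 : ℤ) ^ t.card := by
      intro t ht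
      rw [Finset.mem_filter] at ht
      rw [gg, if_pos ht.2]
    rw [Finset.sum_congr rfl hval]
    apply Finset.sum_bij (fun (s : Finset W) _ => s.image eN)
    · intro s hs
      simp only [Finset.mem_filter, Finset.mem_univ, true_and] at hs
      rw [Finset.mem_filter, Finset.mem_powerset]
      refine ⟨Finset.image_subset_image (Finset.subset_univ s), ?_⟩
      intro x hx hx1
      rw [Finset.mem_image] at hx hx1
      obtain ⟨a, ha, rfl⟩ := hx
      obtain ⟨b, hb, hbe⟩ := hx1
      have hne2 : a ≠ b := by
        intro h; subst h; omega
      have hadj' := hs (Finset.mem_coe.mpr ha) (Finset.mem_coe.mpr hb) hne2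
      rw [hadj a b] at hadj'
      exact hadj'.2 (Or.inl hbe.symm)
    · intro s1 h1 s2 h2 heq
      exact Finset.image_injective heInj heq
    · intro t ht
      rw [Finset.mem_filter, Finset.mem_powerset] at ht
      refine ⟨Finset.univ.filter (fun a => eN a ∈ t), ?_, ?_⟩
      · simp only [Finset.mem_filter, Finset.mem_univ, true_and]
        intro a ha b hb hne2
        rw [Finset.mem_coe, Finset.mem_filter] at ha hb
        rw [hadj a b]
        refine ⟨fun h => hne2 (heInj h), ?_⟩
        rintro (h | h)
        · exact ht.2 (eN a) ha.2 (h ▸ hb.2)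
        · exact ht.2 (eN b) hb.2 (h ▸ ha.2)
      · ext x
        rw [Finset.mem_image]
        constructor
        · rintro ⟨a, ha, rfl⟩
          rw [Finset.mem_filter] at ha
          exact ha.2
        · intro hx
          have hxA : x ∈ A := ht.1 hx
          rw [hA, Finset.mem_image] at hxA
          obtain ⟨a, _, rfl⟩ := hxA
          exact ⟨a, Finset.mem_filter.mpr ⟨Finset.mem_univ _, hx⟩, rfl⟩
    · intro s hs
      rw [Finset.card_image_of_injective _ heInj]
  have hchar : eulerChar G = 1 - SS A := by
    rw [eulerChar_eq_one_sub_Ncl, hNcl]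
  rw [hchar]
  rcases SS_mem A with h | h | h <;> rw [h] <;> simp
end

section
/- Let F be a finite simple graph that is a forest, i.e., F is acyclic (contains no cycles). Then the Euler characteristic of the clique complex of the complement graph Fᶜ lies in {0, 1, 2}. (This reflects the corollary that the graph complement of a forest is either contractible or homotopy equivalent to a sphere.) -/
open Finset

section ForestAux

variable {V : Type*} [Fintype V] [DecidableEq V] {F : SimpleGraph V} [DecidableRel F.Adj]

/-- `s` is an independent set of `F`. -/
def indepSet' (F : SimpleGraph V) (s : Finset V) : Prop :=
  (s : Set V).Pairwise (fun x y => ¬F.Adj x y)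

open Classical in
/-- The independence polynomial of `F` evaluated at `-1`, over ground set `A`. -/
noncomputable def isum (F : SimpleGraph V) (A : Finset V) : ℤ :=
  ∑ s ∈ A.powerset.filter (fun s => indepSet' F s), (-1 : ℤ) ^ s.card

omit [DecidableEq V] [DecidableRel F.Adj] in
lemma isum_empty (F : SimpleGraph V) : isum F ∅ = 1 := by
  classical
  rw [isum]
  rw [Finset.powerset_empty]
  rw [Finset.filter_singleton]
  simp [indepSet']

lemma isum_split (F : SimpleGraph V) [DecidableRel F.Adj] (A : Finset V) {v : V} (hv : v ∈ A) :
    isum F A = isum F (A.erase v)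
      - isum F ((A.erase v).filter (fun x => ¬F.Adj v x)) := by
  classical
  rw [isum, ← Finset.sum_filter_add_sum_filter_not _ (fun s => v ∉ s)]
  have h1 : ((A.powerset.filter (fun s => indepSet' F s)).filter (fun s => v ∉ s))
      = (A.erase v).powerset.filter (fun s => indepSet' F s) := by
    ext s
    simp only [Finset.mem_filter, Finset.mem_powerset, Finset.subset_erase]
    tauto
  have h2 : ∑ s ∈ (A.powerset.filter (fun s => indepSet' F s)).filter (fun s => ¬ v ∉ s),
      (-1 : ℤ) ^ s.card
      = - isum F ((A.erase v).filter (fun x => ¬F.Adj v x)) := by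
    rw [isum, ← Finset.sum_neg_distrib]
    refine Finset.sum_nbij' (fun s => s.erase v) (fun t => insert v t) ?_ ?_ ?_ ?_ ?_
    · intro s hs
      simp only [Finset.mem_filter, Finset.mem_powerset, not_not] at hs ⊢
      obtain ⟨⟨hsA, hind⟩, hvs⟩ := hs
      refine ⟨?_, ?_⟩
      · intro x hx
        simp only [Finset.mem_erase, Finset.mem_filter] at hx ⊢
        refine ⟨⟨hx.1, hsA hx.2⟩, ?_⟩
        exact hind (by simpa using hvs) (by simpa using hx.2) (Ne.symm hx.1)
      · exact hind.mono (by simp [Finset.erase_subset])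
    · intro t ht
      simp only [Finset.mem_filter, Finset.mem_powerset, not_not] at ht ⊢
      obtain ⟨htB, hind⟩ := ht
      have hvnt : v ∉ t := fun h => (Finset.mem_erase.1 (Finset.mem_filter.1 (htB h)).1).1 rfl
      refine ⟨⟨?_, ?_⟩, Finset.mem_insert_self _ _⟩
      · intro x hx
        rcases Finset.mem_insert.1 hx with rfl | hx
        · exact hv
        · exact Finset.mem_of_mem_erase (Finset.mem_filter.1 (htB hx)).1
      · unfold indepSet'
        rw [Finset.coe_insert]
        haveI : Std.Symm (fun x y => ¬F.Adj x y) := ⟨fun x y h => fun h' => h h'.symm⟩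
        rw [Set.pairwise_insert_of_symm]
        refine ⟨hind, fun x hx _ => (Finset.mem_filter.1 (htB (by simpa using hx))).2⟩
    · intro s hs
      simp only [Finset.mem_filter, not_not] at hs
      exact Finset.insert_erase hs.2
    · intro t ht
      simp only [Finset.mem_filter, Finset.mem_powerset] at ht
      have hvnt : v ∉ t := fun h => (Finset.mem_erase.1 (Finset.mem_filter.1 (ht.1 h)).1).1 rfl
      exact Finset.erase_insert hvnt
    · intro s hs
      simp only [Finset.mem_filter, not_not] at hs
      have : s.card = (s.erase v).card + 1 := (Finset.card_erase_add_one hs.2).symm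
      rw [this, pow_succ]
      ring
  rw [h1, h2]
  simp only [isum]
  ring

lemma isum_isolated (F : SimpleGraph V) [DecidableRel F.Adj] (A : Finset V) {v : V} (hv : v ∈ A)
    (hiso : ∀ x ∈ A, ¬F.Adj v x) : isum F A = 0 := by
  classical
  rw [isum_split F A hv]
  have : (A.erase v).filter (fun x => ¬F.Adj v x) = A.erase v :=
    Finset.filter_true_of_mem (fun x hx => hiso x (Finset.mem_of_mem_erase hx))
  rw [this]
  ring

omit [DecidableEq V] [DecidableRel F.Adj] in
lemma exists_forest_leaf {F : SimpleGraph V} (hF : F.IsAcyclic) (A : Finset V)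
    (hA : ∀ v ∈ A, ∃ u ∈ A, F.Adj v u) (hne : A.Nonempty) :
    ∃ v ∈ A, ∃ u ∈ A, F.Adj v u ∧ ∀ w ∈ A, F.Adj v w → w = u := by
  classical
  -- the induced graph on A
  set H : SimpleGraph V :=
    { Adj := fun x y => F.Adj x y ∧ x ∈ A ∧ y ∈ A
      symm := ⟨fun x y h => ⟨h.1.symm, h.2.2, h.2.1⟩⟩
      loopless := ⟨fun x h => F.loopless.irrefl x h.1⟩ } with hH
  have hle : H ≤ F := fun x y h => h.1
  have hHac : H.IsAcyclic := fun v c hc => hF (c.mapLe hle) ((SimpleGraph.Walk.mapLe_isCycle hle).2 hc)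
  -- there is an edge inside A
  obtain ⟨v₀, hv₀⟩ := hne
  obtain ⟨u₀, hu₀, hadj₀⟩ := hA v₀ hv₀
  -- the set of lengths of paths of H
  set L : Finset ℕ := (Finset.range (Fintype.card V)).filter
    (fun n => ∃ a b : V, ∃ p : H.Walk a b, p.IsPath ∧ p.length = n) with hL
  have h1L : 1 ∈ L := by
    rw [hL, Finset.mem_filter, Finset.mem_range]
    constructor
    · have : ({v₀, u₀} : Finset V).card ≤ Fintype.card V := Finset.card_le_univ _
      rw [Finset.card_insert_of_notMem (by simp [hadj₀.ne]), Finset.card_singleton] at this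
      omega
    · exact ⟨v₀, u₀, SimpleGraph.Walk.cons ⟨hadj₀, hv₀, hu₀⟩ SimpleGraph.Walk.nil,
        by simp [SimpleGraph.Walk.isPath_def, hadj₀.ne], rfl⟩
  have hLne : L.Nonempty := ⟨1, h1L⟩
  have hmem : L.max' hLne ∈ (Finset.range (Fintype.card V)).filter
      (fun n => ∃ a b : V, ∃ p : H.Walk a b, p.IsPath ∧ p.length = n) := L.max'_mem hLne
  rw [Finset.mem_filter, Finset.mem_range] at hmem
  obtain ⟨hNr, a, b, p, hp, hlen⟩ := hmem
  have hmax : ∀ n ∈ L, n ≤ L.max' hLne := fun n hn => L.le_max' n hn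
  have hN1 : 1 ≤ L.max' hLne := L.le_max' 1 h1L
  -- p has positive length, so it starts with an edge
  cases p with
  | nil => simp at hlen; omega
  | @cons _ s _ h q =>
    refine ⟨a, h.2.1, s, h.2.2, h.1, ?_⟩
    intro w hw hadj
    by_contra hws
    have hwa : w ≠ a := fun e => F.loopless.irrefl a (e ▸ hadj)
    have hHaw : H.Adj w a := ⟨hadj.symm, hw, h.2.1⟩
    have hq : q.IsPath ∧ a ∉ q.support := by
      rw [SimpleGraph.Walk.cons_isPath_iff] at hp
      exact hp
    -- w must lie on p, else we could extend the path
    have hwp : w ∈ q.support := by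
      by_contra hwq
      have hpath : (SimpleGraph.Walk.cons hHaw (SimpleGraph.Walk.cons h q)).IsPath := by
        rw [SimpleGraph.Walk.cons_isPath_iff]
        refine ⟨hp, ?_⟩
        simp only [SimpleGraph.Walk.support_cons, List.mem_cons]
        push_neg
        exact ⟨hwa, hwq⟩
      have : (SimpleGraph.Walk.cons hHaw (SimpleGraph.Walk.cons h q)).length ∈ L := by
        rw [hL, Finset.mem_filter, Finset.mem_range]
        exact ⟨hpath.length_lt, w, b, _, hpath, rfl⟩
      have hle2 := hmax _ this
      rw [← hlen] at hle2
      simp only [SimpleGraph.Walk.length_cons] at hle2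
      omega
    -- build a cycle
    have hr : w ∈ q.support := hwp
    set r := q.takeUntil w hr with hrdef
    have hrpath : r.IsPath := hq.1.takeUntil hr
    have har : a ∉ r.support := fun hmem => hq.2 (q.support_takeUntil_subset hr hmem)
    have hcyc : (SimpleGraph.Walk.cons hHaw (SimpleGraph.Walk.cons h r)).IsCycle := by
      rw [SimpleGraph.Walk.cons_isCycle_iff]
      constructor
      · rw [SimpleGraph.Walk.cons_isPath_iff]
        exact ⟨hrpath, har⟩
      · simp only [SimpleGraph.Walk.edges_cons, List.mem_cons]
        push_neg
        constructor
        · intro he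
          rw [Sym2.eq_iff] at he
          rcases he with ⟨e1, e2⟩ | ⟨e1, e2⟩
          · exact hwa e1
          · exact hws e1
        · intro he
          exact har (r.snd_mem_support_of_mem_edges he)
    exact hHac _ hcyc

lemma isum_mem_of_acyclic (F : SimpleGraph V) [DecidableRel F.Adj] (hF : F.IsAcyclic)
    (A : Finset V) : isum F A ∈ ({-1, 0, 1} : Set ℤ) := by
  classical
  induction A using Finset.strongInductionOn with
  | _ A ih =>
  rcases A.eq_empty_or_nonempty with rfl | hne
  · rw [isum_empty]; simp
  by_cases hiso : ∃ v ∈ A, ∀ x ∈ A, ¬F.Adj v x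
  · obtain ⟨v, hv, h⟩ := hiso
    rw [isum_isolated F A hv h]; simp
  push_neg at hiso
  obtain ⟨v, hv, u, hu, hadj, huniq⟩ := exists_forest_leaf hF A hiso hne
  have hvu : v ≠ u := hadj.ne
  rw [isum_split F A hu]
  have h0 : isum F (A.erase u) = 0 := by
    apply isum_isolated F _ (Finset.mem_erase.2 ⟨hvu, hv⟩)
    intro x hx hax
    exact (Finset.mem_erase.1 hx).1 (huniq x (Finset.mem_of_mem_erase hx) hax)
  rw [h0]
  have hsub : (A.erase u).filter (fun x => ¬F.Adj u x) ⊆ A :=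
    (Finset.filter_subset _ _).trans (Finset.erase_subset _ _)
  have hnotu : u ∉ (A.erase u).filter (fun x => ¬F.Adj u x) := fun h =>
    (Finset.mem_erase.1 (Finset.mem_filter.1 h).1).1 rfl
  have hss : (A.erase u).filter (fun x => ¬F.Adj u x) ⊂ A :=
    Finset.ssubset_iff_of_subset hsub |>.2 ⟨u, hu, hnotu⟩
  have hB := ih _ hss
  simp only [Set.mem_insert_iff, Set.mem_singleton_iff] at hB ⊢
  rcases hB with h | h | h <;> rw [h] <;> norm_num

omit [DecidableEq V] [DecidableRel F.Adj] in
lemma isClique_compl_iff (F : SimpleGraph V) (s : Finset V) :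
    Fᶜ.IsClique (s : Set V) ↔ indepSet' F s := by
  constructor
  · intro h x hx y hy hxy
    exact ((SimpleGraph.compl_adj F x y).1 (h hx hy hxy)).2
  · intro h x hx y hy hxy
    exact (SimpleGraph.compl_adj F x y).2 ⟨hxy, h hx hy hxy⟩

end ForestAux


/-- The complement of a forest has Euler characteristic in `{0, 1, 2}`
(it is either contractible or homotopy equivalent to a sphere). -/
theorem forest_complement_eulerChar {V : Type*} [Finite V] (F : SimpleGraph V)
    (hF : F.IsAcyclic) :
    eulerChar (Fᶜ) ∈ ({0, 1, 2} : Set ℤ) := by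
  classical
  letI : Fintype V := Fintype.ofFinite V
  letI : DecidableRel F.Adj := Classical.decRel _
  have hset : Finset.univ.powerset.filter (fun s : Finset V => indepSet' F s)
      = insert ∅ (cliquesOf Fᶜ) := by
    ext s
    simp only [Finset.mem_filter, Finset.mem_powerset, Finset.mem_insert, cliquesOf,
      Finset.mem_univ, true_and, Finset.subset_univ, isClique_compl_iff]
    constructor
    · intro h
      rcases s.eq_empty_or_nonempty with rfl | hne
      · exact Or.inl rfl
      · exact Or.inr ⟨hne, h⟩
    · rintro (rfl | ⟨_, h⟩)
      · intro x hx; simp at hx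
      · exact h
  have hnot : (∅ : Finset V) ∉ cliquesOf Fᶜ := by
    simp [cliquesOf]
  have key : eulerChar (Fᶜ) = 1 - isum F Finset.univ := by
    have hcong : ∀ c ∈ cliquesOf Fᶜ, (-1 : ℤ) ^ (c.card + 1) = -((-1 : ℤ) ^ c.card) := by
      intro c _; rw [pow_succ]; ring
    rw [eulerChar, Finset.sum_congr rfl hcong, isum]
    have : (Finset.univ.powerset.filter fun s : Finset V => indepSet' F s)
        = insert ∅ (cliquesOf Fᶜ) := hset
    rw [Finset.filter_congr_decidable] at this ⊢
    rw [this, Finset.sum_insert hnot]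
    simp only [Finset.card_empty, pow_zero]
    rw [Finset.sum_neg_distrib]
    ring
  have hmem := isum_mem_of_acyclic F hF Finset.univ
  simp only [Set.mem_insert_iff, Set.mem_singleton_iff] at hmem ⊢
  rw [key]
  rcases hmem with h | h | h <;> rw [h] <;> norm_num
end

section
/- The forest–tree ratio of G_n = (C_n)ᶜ converges to Euler's number e: since the nonzero eigenvalues of the Kirchhoff (combinatorial) Laplacian of G_n are n - 4·sin²(π·k/n) for k = 1, …, n-1, this says that the sequence n ↦ ∏_{k=1}^{n-1} ( 1 + 1/( n - 4·sin²(π·k/n) ) ) tends to e = exp(1) as n → ∞. -/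
/-- The forest–tree ratio of `G_n = (C_n)ᶜ` converges to Euler's number `e`:
`∏_{k=1}^{n-1} (1 + 1/(n - 4 sin²(π k/n))) → e` as `n → ∞`. -/
theorem forestTreeRatio_tendsto_e :
    Filter.Tendsto
      (fun n : ℕ =>
        ∏ k ∈ Finset.Icc 1 (n - 1),
          (1 + 1 / ((n : ℝ) - 4 * Real.sin (Real.pi * k / n) ^ 2)))
      Filter.atTop (nhds (Real.exp 1)) := by

  have hone : Filter.Tendsto (fun n : ℕ => 1 + 1/(n:ℝ)) Filter.atTop (nhds 1) := by
    have := tendsto_one_div_atTop_nhds_zero_nat.const_add (1:ℝ)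
    simpa using this
  have hpow : Filter.Tendsto (fun n : ℕ => (1 + 1/(n:ℝ))^n) Filter.atTop
      (nhds (Real.exp 1)) := by
    simpa using Real.tendsto_one_add_div_pow_exp 1
  -- lower bound sequence
  have hL : Filter.Tendsto (fun n : ℕ => (1 + 1/(n:ℝ))^(n-1)) Filter.atTop
      (nhds (Real.exp 1)) := by
    have h := hpow.div hone one_ne_zero
    rw [div_one] at h
    refine h.congr' ?_
    filter_upwards [Filter.eventually_ge_atTop 1] with n hn
    have hne : (1 + 1/(n:ℝ)) ≠ 0 := by positivity
    rw [pow_sub₀ _ hne hn, pow_one, div_eq_mul_inv]; rfl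
  -- upper bound sequence
  have hU : Filter.Tendsto (fun n : ℕ => (1 + 1/((n:ℝ) - 4))^(n-1)) Filter.atTop
      (nhds (Real.exp 1)) := by
    have hg : Filter.Tendsto (fun m : ℕ => (1 + 1/(m:ℝ))^m * (1 + 1/(m:ℝ))^3)
        Filter.atTop (nhds (Real.exp 1)) := by
      have := hpow.mul ((hone.pow 3))
      simpa using this
    have hsub : Filter.Tendsto (fun n : ℕ => n - 4) Filter.atTop Filter.atTop :=
      Filter.tendsto_sub_atTop_nat 4
    have h := hg.comp hsub
    refine h.congr' ?_
    filter_upwards [Filter.eventually_ge_atTop 5] with n hn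
    have h4 : ((n - 4 : ℕ) : ℝ) = (n:ℝ) - 4 := by
      push_cast [Nat.cast_sub (by omega : 4 ≤ n)]; ring
    have he : (n - 4) + 3 = n - 1 := by omega
    simp only [Function.comp_apply, h4, ← pow_add, he]
  refine tendsto_of_tendsto_of_tendsto_of_le_of_le' hL hU ?_ ?_
  · filter_upwards [Filter.eventually_ge_atTop 5] with n hn
    have hcard : (Finset.Icc 1 (n-1)).card = n - 1 := by
      rw [Nat.card_Icc]; omega
    calc (1 + 1/(n:ℝ))^(n-1)
        = ∏ _k ∈ Finset.Icc 1 (n-1), (1 + 1/(n:ℝ)) := by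
          rw [Finset.prod_const, hcard]
      _ ≤ _ := by
          apply Finset.prod_le_prod
          · intro k _
            positivity
          · intro k _
            have hs : Real.sin (Real.pi * k / n) ^ 2 ≤ 1 := Real.sin_sq_le_one _
            have hs0 : 0 ≤ Real.sin (Real.pi * k / n) ^ 2 := sq_nonneg _
            have hn5 : (5:ℝ) ≤ n := by exact_mod_cast hn
            have hpos : (0:ℝ) < (n:ℝ) - 4 * Real.sin (Real.pi * k / n) ^ 2 := by
              nlinarith
            have : (n:ℝ) - 4 * Real.sin (Real.pi * k / n) ^ 2 ≤ (n:ℝ) := by nlinarith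
            have := one_div_le_one_div_of_le hpos this
            linarith
  · filter_upwards [Filter.eventually_ge_atTop 5] with n hn
    have hcard : (Finset.Icc 1 (n-1)).card = n - 1 := by
      rw [Nat.card_Icc]; omega
    calc (∏ k ∈ Finset.Icc 1 (n - 1),
          (1 + 1 / ((n : ℝ) - 4 * Real.sin (Real.pi * k / n) ^ 2)))
        ≤ ∏ _k ∈ Finset.Icc 1 (n-1), (1 + 1/((n:ℝ) - 4)) := by
          apply Finset.prod_le_prod
          · intro k _
            have hs : Real.sin (Real.pi * k / n) ^ 2 ≤ 1 := Real.sin_sq_le_one _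
            have hn5 : (5:ℝ) ≤ n := by exact_mod_cast hn
            have hpos : (0:ℝ) < (n:ℝ) - 4 * Real.sin (Real.pi * k / n) ^ 2 := by
              nlinarith
            positivity
          · intro k _
            have hs : Real.sin (Real.pi * k / n) ^ 2 ≤ 1 := Real.sin_sq_le_one _
            have hn5 : (5:ℝ) ≤ n := by exact_mod_cast hn
            have hpos : (0:ℝ) < (n:ℝ) - 4 := by linarith
            have hle : (n:ℝ) - 4 ≤ (n:ℝ) - 4 * Real.sin (Real.pi * k / n) ^ 2 := by
              nlinarith
            have := one_div_le_one_div_of_le hpos hle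
            linarith
      _ = (1 + 1/((n:ℝ) - 4))^(n-1) := by
          rw [Finset.prod_const, hcard]
end

section
/- Fourier diagonalization of the Kirchhoff Laplacian of G_n: let n ≥ 4 and 0 ≤ k < n, and define the vector v : Fin n → ℂ by v_j = exp(2·π·i·k·j/n). Then the Kirchhoff Laplacian matrix L of G_n = (C_n)ᶜ (the diagonal degree matrix minus the adjacency matrix, SimpleGraph.lapMatrix ℂ G_n) satisfies L.mulVec v = λ_{k,n} • v with eigenvalue λ_{k,n} = Σ_{m=2}^{n-2} 2·sin²(π·m·k/n). -/
lemma sin_sum_zero' (n k : ℕ) (hn : 4 ≤ n) :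
    ∑ m ∈ Finset.Icc 2 (n-2), Real.sin (2*Real.pi*m*k/n) = 0 := by
  apply Finset.sum_involution (fun m _ => n - m)
  · intro a ha
    simp only [Finset.mem_Icc] at ha
    have hcast : ((n - a : ℕ) : ℝ) = (n : ℝ) - a := by
      push_cast [Nat.cast_sub (by omega : a ≤ n)]; ring
    rw [hcast]
    have : 2*Real.pi*((n:ℝ) - a)*k/n = 2*Real.pi*k - 2*Real.pi*a*k/n := by
      have hn0 : (n:ℝ) ≠ 0 := by positivity
      field_simp
    rw [this, Real.sin_sub]
    have h1 : Real.sin (2*Real.pi*k) = 0 := by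
      have := Real.sin_nat_mul_pi (2*k)
      convert this using 2; push_cast; ring
    have h2 : Real.cos (2*Real.pi*k) = 1 := by
      have := Real.cos_nat_mul_two_pi k
      convert this using 2; ring
    rw [h1, h2]; ring
  · intro a ha hfa
    simp only [Finset.mem_Icc] at ha
    intro hEq
    apply hfa
    have : n = 2*a := by omega
    subst this
    have : 2*Real.pi*(a:ℝ)*k/(2*a) = k*Real.pi := by
      have : (a:ℝ) ≠ 0 := by
        have : 0 < a := by omega
        positivity
      field_simp
    rw [show ((2*a : ℕ):ℝ) = 2*(a:ℝ) by push_cast; ring, this, Real.sin_nat_mul_pi]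
  · intro a ha
    simp only [Finset.mem_Icc] at ha ⊢
    omega
  · intro a ha
    simp only [Finset.mem_Icc] at ha
    omega

lemma eig_eq' (n k : ℕ) (hn : 4 ≤ n) :
    ((∑ m ∈ Finset.Icc 2 (n - 2), 2 * Real.sin (Real.pi * m * k / n) ^ 2 : ℝ) : ℂ)
      = ∑ m ∈ Finset.Icc 2 (n-2), (1 - Complex.exp (2*(Real.pi:ℂ)*Complex.I*k*m/n)) := by
  have key : ∀ m ∈ Finset.Icc 2 (n-2),
      (1 - Complex.exp (2*(Real.pi:ℂ)*Complex.I*k*m/n))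
        = ((2 * Real.sin (Real.pi * m * k / n) ^ 2 : ℝ) : ℂ)
          - ((Real.sin (2*Real.pi*m*k/n) : ℝ) : ℂ) * Complex.I := by
    intro m _
    have harg : 2*(Real.pi:ℂ)*Complex.I*k*m/n = ((2*Real.pi*m*k/n : ℝ) : ℂ) * Complex.I := by
      push_cast; ring
    rw [harg, Complex.exp_mul_I, ← Complex.ofReal_cos, ← Complex.ofReal_sin]
    have hcos : Real.cos (2*Real.pi*m*k/n) = 1 - 2 * Real.sin (Real.pi * m * k / n) ^ 2 := by
      rw [show 2*Real.pi*(m:ℝ)*k/n = 2 * (Real.pi * m * k / n) by ring, Real.cos_two_mul',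
        Real.cos_sq']; ring
    rw [hcos]
    push_cast
    ring
  rw [Finset.sum_congr rfl key, Finset.sum_sub_distrib, ← Finset.sum_mul]
  rw [← Complex.ofReal_sum, ← Complex.ofReal_sum, sin_sum_zero' n k hn]
  simp

lemma fin_sub_val' {n : ℕ} (a b : Fin n) :
    ((a - b : Fin n)).val = if b.val ≤ a.val then a.val - b.val else a.val + (n - b.val) := by
  have h1 : ((a - b : Fin n)).val = (a.val + (n - b.val)) % n := by
    rw [Fin.sub_def]
    simp only [Nat.add_comm]
  have ha := a.isLt
  have hb := b.isLt
  rw [h1]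
  rcases le_or_gt b.val a.val with h | h
  · rw [if_pos h, show a.val + (n - b.val) = (a.val - b.val) + n by omega,
      Nat.add_mod_right, Nat.mod_eq_of_lt (by omega)]
  · rw [if_neg (by omega), Nat.mod_eq_of_lt (by omega)]

lemma compl_adj_iff' (n : ℕ) (hn : 4 ≤ n) (j m : Fin n) :
    ((cycleGraph n)ᶜ.Adj j (j + m)) ↔ (2 ≤ m.val ∧ m.val ≤ n - 2) := by
  haveI : NeZero n := ⟨by omega⟩
  have hne : j ≠ j + m ↔ m.val ≠ 0 := by
    constructor
    · intro h hm
      apply h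
      have : m = 0 := by ext; simpa using hm
      simp [this]
    · intro hm h
      apply hm
      have : j + m = j + 0 := by simpa using h.symm
      have := add_left_cancel this
      simp [this]
  have h1 : (j - (j + m) : Fin n) = -m := by abel
  have h2 : ((j + m) - j : Fin n) = m := by abel
  have hneg : (-m : Fin n) = 0 - m := by abel
  rw [SimpleGraph.compl_adj]
  simp only [cycleGraph, h1, h2, hneg, ne_eq]
  rw [fin_sub_val']
  have hm := m.isLt
  simp only [Fin.val_zero]
  constructor
  · rintro ⟨hne', hnot⟩
    have hm0 : m.val ≠ 0 := hne.mp hne'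
    have hor : ¬((if (m.val : ℕ) ≤ 0 then 0 - m.val else 0 + (n - m.val)) = 1 ∨ m.val = 1) :=
      fun h => hnot ⟨hne', h⟩
    push_neg at hor
    obtain ⟨hx, hy⟩ := hor
    split_ifs at hx <;> omega
  · rintro ⟨h2', hle⟩
    refine ⟨hne.mpr (by omega), fun hcon => ?_⟩
    obtain ⟨-, h⟩ := hcon
    rcases h with h | h
    · have h' : (if (m.val : ℕ) ≤ 0 then 0 - m.val else 0 + (n - m.val)) = 1 := h
      split_ifs at h' <;> omega
    · omega

/-- Fourier diagonalization of the Kirchhoff Laplacian of `G_n = (C_n)ᶜ`: the vector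
`v_j = exp(2πi k j/n)` is an eigenvector with eigenvalue `∑_{m=2}^{n-2} 2 sin²(π m k/n)`. -/
theorem lapMatrix_fourier_eigenvector (n : ℕ) (hn : 4 ≤ n) (k : ℕ) (hk : k < n) :
    (((cycleGraph n)ᶜ).lapMatrix ℂ).mulVec
        (fun j : Fin n =>
          Complex.exp (2 * (Real.pi : ℂ) * Complex.I * (k : ℂ) * ((j : ℕ) : ℂ) / (n : ℂ))) =
      ((∑ m ∈ Finset.Icc 2 (n - 2), 2 * Real.sin (Real.pi * m * k / n) ^ 2 : ℝ) : ℂ) •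
        (fun j : Fin n =>
          Complex.exp (2 * (Real.pi : ℂ) * Complex.I * (k : ℂ) * ((j : ℕ) : ℂ) / (n : ℂ))) := by
  haveI : NeZero n := ⟨by omega⟩
  have hn0 : (n : ℂ) ≠ 0 := by
    exact_mod_cast Nat.cast_ne_zero.mpr (by omega)
  set w : ℕ → ℂ := fun t => Complex.exp (2*(Real.pi:ℂ)*Complex.I*k*t/n) with hw
  set v : Fin n → ℂ := fun j => Complex.exp
      (2 * (Real.pi : ℂ) * Complex.I * (k : ℂ) * ((j : ℕ) : ℂ) / (n : ℂ)) with hv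
  have hvw : ∀ j : Fin n, v j = w j.val := fun j => rfl
  have w_add : ∀ s t : ℕ, w (s + t) = w s * w t := by
    intro s t
    rw [hw]
    simp only
    rw [← Complex.exp_add]
    congr 1
    push_cast
    ring
  have w_mod : ∀ t : ℕ, w (t % n) = w t := by
    intro t
    conv_rhs => rw [show t = n * (t / n) + t % n from (Nat.div_add_mod t n).symm]
    rw [w_add]
    have : w (n * (t / n)) = 1 := by
      rw [hw]
      simp only
      rw [show 2*(Real.pi:ℂ)*Complex.I*k*(↑(n * (t / n)))/n
          = ((k * (t / n) : ℕ) : ℂ) * (2 * Real.pi * Complex.I) by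
        push_cast; field_simp]
      exact Complex.exp_nat_mul_two_pi_mul_I _
    rw [this, one_mul]
  ext j
  rw [SimpleGraph.lapMatrix_mulVec_apply, SimpleGraph.degree_eq_sum_if_adj,
    SimpleGraph.neighborFinset_eq_filter, Finset.sum_filter, Finset.sum_mul]
  have step1 : (∑ u : Fin n, (if (cycleGraph n)ᶜ.Adj j u then (1:ℂ) else 0) * v j)
      - (∑ u : Fin n, if (cycleGraph n)ᶜ.Adj j u then v u else 0)
      = ∑ u : Fin n, (if (cycleGraph n)ᶜ.Adj j u then v j - v u else 0) := by
    rw [← Finset.sum_sub_distrib]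
    apply Finset.sum_congr rfl
    intro u _
    split_ifs <;> ring
  rw [step1]
  have step2 : (∑ u : Fin n, (if (cycleGraph n)ᶜ.Adj j u then v j - v u else 0))
      = ∑ m : Fin n, (if (cycleGraph n)ᶜ.Adj j (j + m) then v j - v (j + m) else 0) := by
    exact (Fintype.sum_equiv (Equiv.addLeft j)
      (fun m => if (cycleGraph n)ᶜ.Adj j (j + m) then v j - v (j + m) else 0)
      (fun u => if (cycleGraph n)ᶜ.Adj j u then v j - v u else 0)
      (fun m => by simp [Equiv.addLeft])).symm
  rw [step2]
  have step3 : ∀ m : Fin n, (if (cycleGraph n)ᶜ.Adj j (j + m) then v j - v (j + m) else 0)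
      = (if 2 ≤ m.val ∧ m.val ≤ n - 2 then (1 - w m.val) else 0) * v j := by
    intro m
    by_cases h : 2 ≤ m.val ∧ m.val ≤ n - 2
    · rw [if_pos ((compl_adj_iff' n hn j m).mpr h), if_pos h]
      have : v (j + m) = w m.val * v j := by
        rw [hvw, Fin.val_add, w_mod, w_add, hvw, mul_comm]
      rw [this]; ring
    · rw [if_neg (fun hc => h ((compl_adj_iff' n hn j m).mp hc)), if_neg h, zero_mul]
  rw [Finset.sum_congr rfl (fun m _ => step3 m), ← Finset.sum_mul]
  have step4 : (∑ m : Fin n, if 2 ≤ m.val ∧ m.val ≤ n - 2 then (1 - w m.val) else 0)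
      = ∑ t ∈ Finset.Icc 2 (n - 2), (1 - w t) := by
    rw [Fin.sum_univ_eq_sum_range (fun t => if 2 ≤ t ∧ t ≤ n - 2 then (1 - w t) else 0) n]
    rw [← Finset.sum_filter]
    congr 1
    ext t
    simp only [Finset.mem_filter, Finset.mem_range, Finset.mem_Icc]
    omega
  rw [step4]
  rw [Pi.smul_apply, smul_eq_mul, eig_eq' n k hn]
end
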